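/- arXiv:2508.14236 — 5 statements merged into one kernel-verified Lean document; each statement's English description precedes it below -/
import Mathlib

section
/- Let ψ : [0,T] × [0,1] → ℝ be such that ∂_t ψ, ∂_s ψ, and ∂_t∂_s ψ exist everywhere (with one-sided derivatives at boundary points), and suppose ∂_t∂_s ψ is continuous at a point (t₀, 0) with t₀ ∈ [0,T]. Then ∂_s∂_t ψ(t₀, 0) exists and equals ∂_t∂_s ψ(t₀, 0). -/
/-!
Let `L = ∂_t∂_s ψ(t₀,0)`. If `∂_t∂_s ψ` stays within `c` of `L` on a rectangle around `(t₀,0)`,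
two mean value inequalities, first in `t` and then in `s`, bound the mixed increment
`ψ(t,s) - ψ(t,0) - ψ(t₀,s) + ψ(t₀,0) - L (t - t₀) s` by `c |t - t₀| |s|`. Dividing by `t - t₀`
and letting `t → t₀` at fixed `s` gives `|∂_tψ(t₀,s) - ∂_tψ(t₀,0) - L s| ≤ c |s|`, which is the
claimed derivative in `s`; no interchange of limits is needed.
-/

open Set Filter Topology Asymptotics Metric

theorem Convex.norm_image_sub_le_of_norm_hasDerivWithin_le' {G : Type*} [NormedAddCommGroup G]
    [NormedSpace ℝ G] {f f' : ℝ → G} {s : Set ℝ} {a : G} {C x y : ℝ}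
    (hf : ∀ z ∈ s, HasDerivWithinAt f (f' z) s z) (bound : ∀ z ∈ s, ‖f' z - a‖ ≤ C)
    (hs : Convex ℝ s) (xs : x ∈ s) (ys : y ∈ s) :
    ‖f y - f x - (y - x) • a‖ ≤ C * ‖y - x‖ := by
  have hg (z : ℝ) (hz : z ∈ s) : HasDerivWithinAt (fun u => f u - u • a) (f' z - a) s z := by
    have := (hf z hz).sub ((hasDerivWithinAt_id z s).smul_const a)
    rwa [one_smul] at this
  calc ‖f y - f x - (y - x) • a‖ = ‖(f y - y • a) - (f x - x • a)‖ := by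
        rw [sub_smul]; congr 1; abel
    _ ≤ C * ‖y - x‖ := hs.norm_image_sub_le_of_norm_hasDerivWithin_le hg bound xs ys

theorem HasDerivWithinAt.norm_sub_le_of_eventually_le {𝕜 F : Type*} [NontriviallyNormedField 𝕜]
    [NormedAddCommGroup F] [NormedSpace 𝕜 F] {f : 𝕜 → F} {f' a : F} {s : Set 𝕜} {x : 𝕜}
    {C : ℝ} (hf : HasDerivWithinAt f f' s x) (hs : UniqueDiffWithinAt 𝕜 s x)
    (h : ∀ᶠ y in 𝓝[s] x, ‖f y - f x - (y - x) • a‖ ≤ C * ‖y - x‖) : ‖f' - a‖ ≤ C := by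
  have : (𝓝[s \ {x}] x).NeBot := by
    rwa [← accPt_principal_iff_nhdsWithin, ← uniqueDiffWithinAt_iff_accPt]
  refine le_of_tendsto ((hasDerivWithinAt_iff_tendsto_slope.1 hf).sub_const a).norm ?_
  filter_upwards [nhdsWithin_mono x sdiff_subset h, self_mem_nhdsWithin] with y hy hys
  have hyx : y - x ≠ 0 := sub_ne_zero.2 hys.2
  calc ‖slope f x y - a‖ = ‖y - x‖⁻¹ * ‖f y - f x - (y - x) • a‖ := by
        rw [slope_def_module, ← norm_inv, ← norm_smul, smul_sub (y - x)⁻¹ (f y - f x), smul_smul,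
          inv_mul_cancel₀ hyx, one_smul]
    _ ≤ C := by
        rw [inv_mul_le_iff₀ (norm_pos_iff.2 hyx)]; linarith

theorem norm_mixed_increment_sub_le {G : Type*} [NormedAddCommGroup G] [NormedSpace ℝ G]
    {f g h : ℝ → ℝ → G} {A B : Set ℝ} {L : G} {C : ℝ} (hA : Convex ℝ A) (hB : Convex ℝ B)
    (hf : ∀ t ∈ A, ∀ s ∈ B, HasDerivWithinAt (f t) (g t s) B s)
    (hg : ∀ t ∈ A, ∀ s ∈ B, HasDerivWithinAt (g · s) (h t s) A t)
    (bound : ∀ t ∈ A, ∀ s ∈ B, ‖h t s - L‖ ≤ C)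
    {t t' s s' : ℝ} (ht : t ∈ A) (ht' : t' ∈ A) (hs : s ∈ B) (hs' : s' ∈ B) :
    ‖f t' s' - f t' s - (f t s' - f t s) - ((t' - t) * (s' - s)) • L‖ ≤
      C * |t' - t| * |s' - s| := by
  have inner (σ : ℝ) (hσ : σ ∈ B) : ‖g t' σ - g t σ - (t' - t) • L‖ ≤ C * ‖t' - t‖ :=
    hA.norm_image_sub_le_of_norm_hasDerivWithin_le' (fun τ hτ => hg τ hτ σ hσ)
      (fun τ hτ => bound τ hτ σ hσ) ht ht'
  have outer := hB.norm_image_sub_le_of_norm_hasDerivWithin_le'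
    (fun σ hσ => (hf t' ht' σ hσ).sub (hf t ht σ hσ)) inner hs hs'
  simp only [Real.norm_eq_abs, smul_smul] at outer
  calc _ = ‖f t' s' - f t s' - (f t' s - f t s) - ((s' - s) * (t' - t)) • L‖ := by
        rw [mul_comm (t' - t)]; congr 1; abel
    _ ≤ C * |t' - t| * |s' - s| := outer

/-- boundary-point Schwarz theorem: let `ψ : [0,T] × [0,1] → ℝ`
be such that `∂_t ψ`, `∂_s ψ` and `∂_t ∂_s ψ` exist everywhere (one-sided at
boundary points, encoded via `derivWithin` on the intervals), and suppose
`∂_t ∂_s ψ` is jointly continuous at a point `(t₀, 0)` with `t₀ ∈ [0,T]`.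
Then `∂_s ∂_t ψ (t₀, 0)` exists and equals `∂_t ∂_s ψ (t₀, 0)`. -/
theorem boundary_schwarz (T : ℝ) (hT : 0 < T) (ψ : ℝ → ℝ → ℝ) (t₀ : ℝ)
    (ht₀ : t₀ ∈ Icc (0 : ℝ) T)
    -- existence of ∂_t ψ
    (hdt : ∀ t ∈ Icc (0 : ℝ) T, ∀ s ∈ Icc (0 : ℝ) 1,
      DifferentiableWithinAt ℝ (fun t' => ψ t' s) (Icc 0 T) t)
    -- existence of ∂_s ψ
    (hds : ∀ t ∈ Icc (0 : ℝ) T, ∀ s ∈ Icc (0 : ℝ) 1,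
      DifferentiableWithinAt ℝ (fun s' => ψ t s') (Icc 0 1) s)
    -- existence of ∂_t ∂_s ψ
    (hdts : ∀ t ∈ Icc (0 : ℝ) T, ∀ s ∈ Icc (0 : ℝ) 1,
      DifferentiableWithinAt ℝ
        (fun t' => derivWithin (fun s' => ψ t' s') (Icc 0 1) s) (Icc 0 T) t)
    -- continuity of ∂_t ∂_s ψ at (t₀, 0)
    (hcont : ContinuousWithinAt
      (fun p : ℝ × ℝ =>
        derivWithin (fun t' => derivWithin (fun s' => ψ t' s') (Icc 0 1) p.2)
          (Icc 0 T) p.1)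
      (Icc (0 : ℝ) T ×ˢ Icc (0 : ℝ) 1) (t₀, 0)) :
    HasDerivWithinAt (fun s => derivWithin (fun t' => ψ t' s) (Icc (0 : ℝ) T) t₀)
      (derivWithin (fun t' => derivWithin (fun s' => ψ t' s') (Icc (0 : ℝ) 1) 0)
        (Icc (0 : ℝ) T) t₀)
      (Icc (0 : ℝ) 1) 0 := by
  rw [hasDerivWithinAt_iff_isLittleO, isLittleO_iff]
  intro c hc
  obtain ⟨δ, hδ, hclose⟩ :=
    mem_nhdsWithin_iff.1 (hcont.eventually (closedBall_mem_nhds _ hc))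
  have h0 : (0 : ℝ) ∈ Icc (0 : ℝ) 1 ∩ ball 0 δ := ⟨left_mem_Icc.2 zero_le_one, mem_ball_self hδ⟩
  filter_upwards [inter_mem_nhdsWithin _ (ball_mem_nhds 0 hδ)] with s hs
  refine ((hdt t₀ ht₀ s hs.1).hasDerivWithinAt.sub (hdt t₀ ht₀ 0 h0.1).hasDerivWithinAt)
    |>.norm_sub_le_of_eventually_le (uniqueDiffOn_Icc hT t₀ ht₀) ?_
  filter_upwards [inter_mem_nhdsWithin _ (ball_mem_nhds t₀ hδ)] with t ht
  have increment := norm_mixed_increment_sub_le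
    ((convex_Icc 0 T).inter (convex_ball t₀ δ)) ((convex_Icc 0 1).inter (convex_ball 0 δ))
    (fun t ht s hs => (hds t ht.1 s hs.1).hasDerivWithinAt.mono inter_subset_left)
    (fun t ht s hs => (hdts t ht.1 s hs.1).hasDerivWithinAt.mono inter_subset_left)
    (fun t ht s hs => hclose ⟨ball_prod_same t₀ (0 : ℝ) δ ▸ mk_mem_prod ht.2 hs.2,
      mk_mem_prod ht.1 hs.1⟩)
    ⟨ht₀, mem_ball_self hδ⟩ ht h0 hs
  simp only [Pi.sub_apply, smul_eq_mul, Real.norm_eq_abs, sub_zero] at increment ⊢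
  convert increment using 1 <;> ring_nf
end

section
/- Let A, B, G ∈ ℝ^{n×n}-sized matrices of compatible dimensions, R = Rᵀ > 0, Q = Qᵀ ≥ 0, Γ, and suppose P, Λ, H solve on [0,T] the coupled Riccati-type ODE system: Ṗ = −AᵀP − PA + PBR⁻¹BᵀP − Q with P(T) = Q_f; Ḣ = −AᵀH + PBR⁻¹BᵀH − H[A + G − BR⁻¹Bᵀ(P + Λ + H + Hᵀ)] − PG + QΓ with H(T) = −Q_fΓ_f; and the stated equation for Λ̇ with Λ(T) = Γ_fᵀQ_fΓ_f. Then Z := P + Λ + H + Hᵀ satisfies the standard Riccati equation Ż = −(A+G)ᵀZ − Z(A+G) + ZBR⁻¹BᵀZ − (I−Γ)ᵀQ(I−Γ) with Z(T) = (I−Γ_fᵀ)Q_f(I−Γ_f). -/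
/-!
Summing the three equations gives the Riccati equation for `Z = P + Λ + H + Hᵀ` as soon as `P`
and `Λ` are symmetric, which is not assumed. Since `Q`, `R` and `Q_f` are symmetric, the
antisymmetric parts `P - Pᵀ` and `Λ - Λᵀ` satisfy linear equations `X' = C₁ X + X C₂` with
continuous coefficients and vanish at `T`, so by uniqueness of solutions they vanish on `[0, T]`.
-/

open Matrix Set

theorem eqOn_zero_of_hasDerivAt_eq_mul_add_mul {E : Type*} [NormedRing E] [NormedAlgebra ℝ E]
    {a b : ℝ} {f F₁ F₂ : ℝ → E}
    (hF₁ : ContinuousOn F₁ (Icc a b)) (hF₂ : ContinuousOn F₂ (Icc a b))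
    (hf : ∀ t ∈ Icc a b, HasDerivAt f (F₁ t * f t + f t * F₂ t) t) (hb : f b = 0) :
    EqOn f 0 (Icc a b) := by
  obtain ⟨C, hC⟩ := isCompact_Icc.exists_bound_of_continuousOn (hF₁.norm.add hF₂.norm)
  have hlip : ∀ t ∈ Ioc a b,
      LipschitzOnWith C.toNNReal (fun x => F₁ t * x + x * F₂ t) univ := by
    intro t ht
    refine (LipschitzWith.of_dist_le_mul fun x y => ?_).lipschitzOnWith
    rw [dist_eq_norm, dist_eq_norm]
    calc ‖F₁ t * x + x * F₂ t - (F₁ t * y + y * F₂ t)‖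
        = ‖F₁ t * (x - y) + (x - y) * F₂ t‖ := by noncomm_ring
      _ ≤ (‖F₁ t‖ + ‖F₂ t‖) * ‖x - y‖ := by
        rw [add_mul]
        exact (norm_add_le _ _).trans
          (add_le_add (norm_mul_le _ _) ((norm_mul_le _ _).trans_eq (mul_comm _ _)))
      _ ≤ C.toNNReal * ‖x - y‖ := by
        gcongr
        exact (le_abs_self _).trans
          ((hC t (Ioc_subset_Icc_self ht)).trans (Real.le_coe_toNNReal C))
  refine ODE_solution_unique_of_mem_Icc_left hlip (HasDerivAt.continuousOn hf)
    (fun t ht => (hf t (Ioc_subset_Icc_self ht)).hasDerivWithinAt) (fun _ _ => mem_univ _)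
    continuousOn_const (fun t _ => ?_) (fun _ _ => mem_univ _) hb
  simp only [Pi.zero_apply, mul_zero, zero_mul, add_zero]
  exact hasDerivWithinAt_const t (Iic t) 0

theorem Matrix.isSymm_of_skew_linear_ode {ι : Type*} [Fintype ι] [DecidableEq ι] {a b : ℝ}
    {X F C₁ C₂ : ℝ → Matrix ι ι ℝ}
    (hX : ∀ t ∈ Icc a b, ∀ i j, HasDerivAt (fun s => X s i j) (F t i j) t)
    (hC₁ : ContinuousOn C₁ (Icc a b)) (hC₂ : ContinuousOn C₂ (Icc a b))
    (hF : ∀ t ∈ Icc a b, F t - (F t)ᵀ = C₁ t * (X t - (X t)ᵀ) + (X t - (X t)ᵀ) * C₂ t)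
    (hb : (X b).IsSymm) : ∀ t ∈ Icc a b, (X t).IsSymm := by
  -- any submultiplicative norm will do; it induces the entrywise topology, so `HasDerivAt`
  -- and `ContinuousOn` keep their meaning
  let := Matrix.linftyOpNormedRing (n := ι) (α := ℝ)
  let := Matrix.linftyOpNormedAlgebra (n := ι) (α := ℝ) (R := ℝ)
  have hskew : ∀ t ∈ Icc a b, HasDerivAt (fun s => X s - (X s)ᵀ)
      (C₁ t * (X t - (X t)ᵀ) + (X t - (X t)ᵀ) * C₂ t) t := fun t ht => by
    rw [← hF t ht]
    exact hasDerivAt_pi.2 fun i => hasDerivAt_pi.2 fun j => (hX t ht i j).sub (hX t ht j i)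
  have hzero := eqOn_zero_of_hasDerivAt_eq_mul_add_mul hC₁ hC₂ hskew (sub_eq_zero.2 hb.eq.symm)
  exact fun t ht => (sub_eq_zero.1 (hzero ht)).symm

theorem Matrix.continuousOn_of_forall_hasDerivAt_apply {m n : Type*} [Fintype m] [Fintype n]
    {X F : ℝ → Matrix m n ℝ} {s : Set ℝ}
    (h : ∀ t ∈ s, ∀ i j, HasDerivAt (fun u => X u i j) (F t i j) t) : ContinuousOn X s :=
  fun t ht => (hasDerivAt_pi.2 fun i => hasDerivAt_pi.2 fun j => h t ht i j).continuousAt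
    |>.continuousWithinAt

namespace MeanFieldLQ

variable {ι κ α : Type*} [Fintype ι] [Fintype κ] [CommRing α]

-- Right-hand sides of the equations for `Ṗ`, `Λ̇`, `Ḣ` and `Ż`, with `S` in the role of `R⁻¹`.
def rhsP (A Q : Matrix ι ι α) (B : Matrix ι κ α) (S : Matrix κ κ α) (P : Matrix ι ι α) :
    Matrix ι ι α :=
  -(Aᵀ * P) - P * A + P * B * S * Bᵀ * P - Q

def rhsΛ (A G Q Γ : Matrix ι ι α) (B : Matrix ι κ α) (S : Matrix κ κ α) (P Λ H : Matrix ι ι α) :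
    Matrix ι ι α :=
  -((Λ + H) * B * S * Bᵀ * (Λ + Hᵀ))
    - Λ * (A + G - B * S * Bᵀ * (P + Λ + H + Hᵀ))
    - (A + G - B * S * Bᵀ * (P + Λ + H + Hᵀ))ᵀ * Λ
    + Hᵀ * B * S * Bᵀ * H - Hᵀ * G - Gᵀ * H - Γᵀ * Q * Γ

def rhsH (A G Q Γ : Matrix ι ι α) (B : Matrix ι κ α) (S : Matrix κ κ α) (P Λ H : Matrix ι ι α) :
    Matrix ι ι α :=
  -(Aᵀ * H) + P * B * S * Bᵀ * H - H * (A + G - B * S * Bᵀ * (P + Λ + H + Hᵀ)) - P * G + Q * Γ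

def riccatiRhs [DecidableEq ι] (A Q Γ : Matrix ι ι α) (B : Matrix ι κ α) (S : Matrix κ κ α)
    (Z : Matrix ι ι α) : Matrix ι ι α :=
  -(Aᵀ * Z) - Z * A + Z * B * S * Bᵀ * Z - (1 - Γ)ᵀ * Q * (1 - Γ)

variable {A G Q Γ : Matrix ι ι α} {B : Matrix ι κ α} {S : Matrix κ κ α}

theorem rhsP_sub_transpose (hS : S.IsSymm) (hQ : Q.IsSymm) (P : Matrix ι ι α) :
    rhsP A Q B S P - (rhsP A Q B S P)ᵀ
      = (-Aᵀ + Pᵀ * B * S * Bᵀ) * (P - Pᵀ) + (P - Pᵀ) * (-A + B * S * Bᵀ * P) := by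
  simp only [rhsP, transpose_mul, transpose_add, transpose_sub, transpose_neg,
    transpose_transpose, hS.eq, hQ.eq, Matrix.mul_assoc, Matrix.mul_add, Matrix.add_mul,
    Matrix.mul_sub, Matrix.sub_mul, Matrix.mul_neg, Matrix.neg_mul]
  abel

theorem rhsΛ_sub_transpose (hS : S.IsSymm) (hQ : Q.IsSymm) (P Λ H : Matrix ι ι α) :
    rhsΛ A G Q Γ B S P Λ H - (rhsΛ A G Q Γ B S P Λ H)ᵀ
      = (-((Λᵀ + H) * B * S * Bᵀ) - (A + G - B * S * Bᵀ * (P + Λ + H + Hᵀ))ᵀ) * (Λ - Λᵀ)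
        + (Λ - Λᵀ) * (-(B * S * Bᵀ * (Λ + Hᵀ)) - (A + G - B * S * Bᵀ * (P + Λ + H + Hᵀ))) := by
  simp only [rhsΛ, transpose_mul, transpose_add, transpose_sub, transpose_neg,
    transpose_transpose, hS.eq, hQ.eq, Matrix.mul_assoc, Matrix.mul_add, Matrix.add_mul,
    Matrix.mul_sub, Matrix.sub_mul, Matrix.mul_neg, Matrix.neg_mul]
  abel

theorem rhsP_add_rhsΛ_add_rhsH_add_transpose [DecidableEq ι] (hS : S.IsSymm) (hQ : Q.IsSymm)
    {P Λ : Matrix ι ι α} (hP : P.IsSymm) (hΛ : Λ.IsSymm) (H : Matrix ι ι α) :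
    rhsP A Q B S P + rhsΛ A G Q Γ B S P Λ H + rhsH A G Q Γ B S P Λ H
        + (rhsH A G Q Γ B S P Λ H)ᵀ
      = riccatiRhs (A + G) Q Γ B S (P + Λ + H + Hᵀ) := by
  simp only [rhsP, rhsΛ, rhsH, riccatiRhs, transpose_mul, transpose_add, transpose_sub,
    transpose_neg, transpose_one, transpose_transpose, hS.eq, hQ.eq, hP.eq, hΛ.eq,
    Matrix.mul_assoc, Matrix.mul_add, Matrix.add_mul, Matrix.mul_sub, Matrix.sub_mul,
    Matrix.mul_one, Matrix.one_mul]
  abel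

end MeanFieldLQ

open MeanFieldLQ

theorem Z_satisfies_riccati_general {n n₁ : ℕ} (T : ℝ)
    (A G Q Γ Qf Γf : Matrix (Fin n) (Fin n) ℝ)
    (B : Matrix (Fin n) (Fin n₁) ℝ) (R : Matrix (Fin n₁) (Fin n₁) ℝ)
    (hR : R.PosDef) (hQ : Q.PosSemidef) (hQf : Qf.PosSemidef)
    (P Λ H : ℝ → Matrix (Fin n) (Fin n) ℝ)
    -- Ṗ = −AᵀP − PA + PBR⁻¹BᵀP − Q
    (hP : ∀ t ∈ Icc (0 : ℝ) T, ∀ i j, HasDerivAt (fun s => P s i j)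
      ((-(Aᵀ * P t) - P t * A + P t * B * R⁻¹ * Bᵀ * P t - Q) i j) t)
    -- Λ̇ = −(Λ+H)BR⁻¹Bᵀ(Λ+Hᵀ) − Λ[A+G−BR⁻¹Bᵀ(P+Λ+H+Hᵀ)]
    --      − [A+G−BR⁻¹Bᵀ(P+Λ+H+Hᵀ)]ᵀΛ + HᵀBR⁻¹BᵀH − HᵀG − GᵀH − ΓᵀQΓ
    (hΛ : ∀ t ∈ Icc (0 : ℝ) T, ∀ i j, HasDerivAt (fun s => Λ s i j)
      ((-((Λ t + H t) * B * R⁻¹ * Bᵀ * (Λ t + (H t)ᵀ))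
        - Λ t * (A + G - B * R⁻¹ * Bᵀ * (P t + Λ t + H t + (H t)ᵀ))
        - (A + G - B * R⁻¹ * Bᵀ * (P t + Λ t + H t + (H t)ᵀ))ᵀ * Λ t
        + (H t)ᵀ * B * R⁻¹ * Bᵀ * H t - (H t)ᵀ * G - Gᵀ * H t - Γᵀ * Q * Γ) i j) t)
    -- Ḣ = −AᵀH + PBR⁻¹BᵀH − H[A+G−BR⁻¹Bᵀ(P+Λ+H+Hᵀ)] − PG + QΓ
    (hH : ∀ t ∈ Icc (0 : ℝ) T, ∀ i j, HasDerivAt (fun s => H s i j)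
      ((-(Aᵀ * H t) + P t * B * R⁻¹ * Bᵀ * H t
        - H t * (A + G - B * R⁻¹ * Bᵀ * (P t + Λ t + H t + (H t)ᵀ))
        - P t * G + Q * Γ) i j) t)
    -- terminal conditions
    (hPT : P T = Qf) (hΛT : Λ T = Γfᵀ * Qf * Γf) (hHT : H T = -(Qf * Γf)) :
    (∀ t ∈ Icc (0 : ℝ) T, ∀ i j,
      HasDerivAt (fun s => (P s + Λ s + H s + (H s)ᵀ) i j)
        (((-((A + G)ᵀ * (P t + Λ t + H t + (H t)ᵀ))
          - (P t + Λ t + H t + (H t)ᵀ) * (A + G)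
          + (P t + Λ t + H t + (H t)ᵀ) * B * R⁻¹ * Bᵀ * (P t + Λ t + H t + (H t)ᵀ)
          - (1 - Γ)ᵀ * Q * (1 - Γ) : Matrix (Fin n) (Fin n) ℝ)) i j) t)
    ∧ P T + Λ T + H T + (H T)ᵀ = (1 - Γfᵀ) * Qf * (1 - Γf) := by
  have hS : R⁻¹.IsSymm := (isHermitian_iff_isSymm.1 hR.isHermitian).inv
  have hQs : Q.IsSymm := isHermitian_iff_isSymm.1 hQ.isHermitian
  have hQfs : Qf.IsSymm := isHermitian_iff_isSymm.1 hQf.isHermitian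
  have hPc := continuousOn_of_forall_hasDerivAt_apply hP
  have hΛc := continuousOn_of_forall_hasDerivAt_apply hΛ
  have hHc := continuousOn_of_forall_hasDerivAt_apply hH
  have hPsym : ∀ t ∈ Icc (0 : ℝ) T, (P t).IsSymm :=
    isSymm_of_skew_linear_ode hP (by fun_prop) (by fun_prop)
      (fun t _ => rhsP_sub_transpose hS hQs (P t)) (hPT ▸ hQfs)
  have hΛsym : ∀ t ∈ Icc (0 : ℝ) T, (Λ t).IsSymm :=
    isSymm_of_skew_linear_ode hΛ (by fun_prop) (by fun_prop)
      (fun t _ => rhsΛ_sub_transpose hS hQs (P t) (Λ t) (H t))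
      (by rw [hΛT, IsSymm, transpose_mul, transpose_mul, transpose_transpose, hQfs.eq,
        Matrix.mul_assoc])
  refine ⟨fun t ht i j => ?_, ?_⟩
  · have hsum := rhsP_add_rhsΛ_add_rhsH_add_transpose (A := A) (G := G) (Γ := Γ) (B := B) hS hQs
      (hPsym t ht) (hΛsym t ht) (H t)
    exact ((((hP t ht i j).add (hΛ t ht i j)).add (hH t ht i j)).add (hH t ht j i)).congr_deriv
      (congr_fun₂ hsum i j)
  · rw [hPT, hΛT, hHT]
    simp only [transpose_neg, transpose_mul, hQfs.eq, Matrix.mul_sub, Matrix.sub_mul,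
      Matrix.one_mul, Matrix.mul_one, Matrix.mul_assoc]
    abel

/-- if `(P, Λ, H)` solve the coupled Riccati-type ODE system of the
LQ mean field social optimization problem on `[0,T]` (with the stated terminal
conditions), then `Z := P + Λ + H + Hᵀ` satisfies the standard Riccati equation
`Ż = −(A+G)ᵀZ − Z(A+G) + Z B R⁻¹ Bᵀ Z − (I−Γ)ᵀ Q (I−Γ)` with terminal value
`Z(T) = (I−Γ_fᵀ) Q_f (I−Γ_f)`.  The ODEs are stated entrywise. -/
theorem Z_satisfies_riccati {n n₁ : ℕ} (T : ℝ) (hT : 0 < T)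
    (A G Q Γ Qf Γf : Matrix (Fin n) (Fin n) ℝ)
    (B : Matrix (Fin n) (Fin n₁) ℝ) (R : Matrix (Fin n₁) (Fin n₁) ℝ)
    (hR : R.PosDef) (hQ : Q.PosSemidef) (hQf : Qf.PosSemidef)
    (P Λ H : ℝ → Matrix (Fin n) (Fin n) ℝ)
    -- Ṗ = −AᵀP − PA + PBR⁻¹BᵀP − Q
    (hP : ∀ t ∈ Icc (0 : ℝ) T, ∀ i j, HasDerivAt (fun s => P s i j)
      ((-(Aᵀ * P t) - P t * A + P t * B * R⁻¹ * Bᵀ * P t - Q) i j) t)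
    -- Λ̇ = −(Λ+H)BR⁻¹Bᵀ(Λ+Hᵀ) − Λ[A+G−BR⁻¹Bᵀ(P+Λ+H+Hᵀ)]
    --      − [A+G−BR⁻¹Bᵀ(P+Λ+H+Hᵀ)]ᵀΛ + HᵀBR⁻¹BᵀH − HᵀG − GᵀH − ΓᵀQΓ
    (hΛ : ∀ t ∈ Icc (0 : ℝ) T, ∀ i j, HasDerivAt (fun s => Λ s i j)
      ((-((Λ t + H t) * B * R⁻¹ * Bᵀ * (Λ t + (H t)ᵀ))
        - Λ t * (A + G - B * R⁻¹ * Bᵀ * (P t + Λ t + H t + (H t)ᵀ))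
        - (A + G - B * R⁻¹ * Bᵀ * (P t + Λ t + H t + (H t)ᵀ))ᵀ * Λ t
        + (H t)ᵀ * B * R⁻¹ * Bᵀ * H t - (H t)ᵀ * G - Gᵀ * H t - Γᵀ * Q * Γ) i j) t)
    -- Ḣ = −AᵀH + PBR⁻¹BᵀH − H[A+G−BR⁻¹Bᵀ(P+Λ+H+Hᵀ)] − PG + QΓ
    (hH : ∀ t ∈ Icc (0 : ℝ) T, ∀ i j, HasDerivAt (fun s => H s i j)
      ((-(Aᵀ * H t) + P t * B * R⁻¹ * Bᵀ * H t
        - H t * (A + G - B * R⁻¹ * Bᵀ * (P t + Λ t + H t + (H t)ᵀ))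
        - P t * G + Q * Γ) i j) t)
    -- terminal conditions
    (hPT : P T = Qf) (hΛT : Λ T = Γfᵀ * Qf * Γf) (hHT : H T = -(Qf * Γf)) :
    (∀ t ∈ Icc (0 : ℝ) T, ∀ i j,
      HasDerivAt (fun s => (P s + Λ s + H s + (H s)ᵀ) i j)
        (((-((A + G)ᵀ * (P t + Λ t + H t + (H t)ᵀ))
          - (P t + Λ t + H t + (H t)ᵀ) * (A + G)
          + (P t + Λ t + H t + (H t)ᵀ) * B * R⁻¹ * Bᵀ * (P t + Λ t + H t + (H t)ᵀ)
          - (1 - Γ)ᵀ * Q * (1 - Γ) : Matrix (Fin n) (Fin n) ℝ)) i j) t)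
    ∧ P T + Λ T + H T + (H T)ᵀ = (1 - Γfᵀ) * Qf * (1 - Γf) :=
  Z_satisfies_riccati_general T A G Q Γ Qf Γf B R hR hQ hQf P Λ H hP hΛ hH hPT hΛT hHT
end

section
/- In the systemic risk LQ model, suppose (P, Λ, H) solve on [0,T]: 0 = Ṗ − (P+q)² + ε₀ with P(T)=c; 0 = Λ̇ + (Λ+H)² − (H−q)² − 2Λ(P+Λ+2H) + ε₀ with Λ(T)=c; 0 = Ḣ − (P+q)(H−q) − H(P+Λ+2H) − ε₀ with H(T)=−c. Then Λ(t) + 2H(t) = −P(t) for all t ∈ [0,T], and consequently the feedback control û(t,x,x̄) = −[(P+q)x + (Λ+2H−q)x̄] equals (P(t)+q)(x̄ − x). -/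
open Set

/-!
Adding the three equations, `Z := P + Λ + 2H` satisfies the autonomous Riccati equation
`Ż = Z²`: with `a = Λ + H` and `b = H + P` the right-hand sides sum to `-a² + b² + 2a(a + b)
= (a + b)²`, and `a + b = Z`. Since `Z(T) = c + c - 2c = 0`, backward uniqueness for the linear
equation `ẏ = Z(t) y`, solved by both `Z` and `0`, forces `Z ≡ 0` on `[0, T]`.
-/

theorem eqOn_zero_of_hasDerivAt_smul_of_eq_zero_right {E : Type*} [NormedAddCommGroup E]
    [NormedSpace ℝ E] {f : ℝ → E} {g : ℝ → ℝ} {a b : ℝ} (hg : ContinuousOn g (Icc a b))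
    (hf : ∀ t ∈ Icc a b, HasDerivAt f (g t • f t) t) (hb : f b = 0) :
    EqOn f 0 (Icc a b) := by
  obtain ⟨C, hC⟩ := isCompact_Icc.exists_bound_of_continuousOn hg
  refine ODE_solution_unique_of_mem_Icc_left (v := fun t x => g t • x) (s := fun _ => univ)
    (K := C.toNNReal) (fun t ht => ?_) (fun t ht => (hf t ht).continuousAt.continuousWithinAt)
    (fun t ht => (hf t (Ioc_subset_Icc_self ht)).hasDerivWithinAt) (fun _ _ => mem_univ _)
    continuousOn_const (fun t _ => ?_) (fun _ _ => mem_univ _) hb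
  · have hgC : ‖g t‖₊ ≤ C.toNNReal := by
      rw [← NNReal.coe_le_coe, coe_nnnorm, Real.coe_toNNReal']
      exact (hC t (Ioc_subset_Icc_self ht)).trans (le_max_left _ _)
    exact ((lipschitzWith_smul (g t)).weaken hgC).lipschitzOnWith
  · rw [Pi.zero_apply, smul_zero]
    exact hasDerivWithinAt_const t _ _

theorem hasDerivAt_systemicRisk_sum {q ε₀ t : ℝ} {P Λ H : ℝ → ℝ}
    (hP : HasDerivAt P ((P t + q) ^ 2 - ε₀) t)
    (hΛ : HasDerivAt Λ
      (-((Λ t + H t) ^ 2) + (H t - q) ^ 2 + 2 * Λ t * (P t + Λ t + 2 * H t) - ε₀) t)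
    (hH : HasDerivAt H ((P t + q) * (H t - q) + H t * (P t + Λ t + 2 * H t) + ε₀) t) :
    HasDerivAt (fun s => P s + Λ s + 2 * H s)
      ((P t + Λ t + 2 * H t) * (P t + Λ t + 2 * H t)) t := by
  refine ((hP.add hΛ).add (hH.const_mul 2)).congr_deriv ?_
  ring

theorem systemic_risk_Z1_eq_negP_general (T q ε₀ c : ℝ)
    (P Λ H : ℝ → ℝ)
    (hP : ∀ t ∈ Icc (0 : ℝ) T, HasDerivAt P ((P t + q) ^ 2 - ε₀) t)
    (hPT : P T = c)
    (hΛ : ∀ t ∈ Icc (0 : ℝ) T, HasDerivAt Λ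
      (-((Λ t + H t) ^ 2) + (H t - q) ^ 2 + 2 * Λ t * (P t + Λ t + 2 * H t) - ε₀) t)
    (hΛT : Λ T = c)
    (hH : ∀ t ∈ Icc (0 : ℝ) T, HasDerivAt H
      ((P t + q) * (H t - q) + H t * (P t + Λ t + 2 * H t) + ε₀) t)
    (hHT : H T = -c) :
    ∀ t ∈ Icc (0 : ℝ) T,
      Λ t + 2 * H t = -P t
      ∧ ∀ x xbar : ℝ,
          -((P t + q) * x + (Λ t + 2 * H t - q) * xbar)
            = (P t + q) * (xbar - x) := by
  have hZ : ∀ t ∈ Icc (0 : ℝ) T, HasDerivAt (fun s => P s + Λ s + 2 * H s)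
      ((P t + Λ t + 2 * H t) * (P t + Λ t + 2 * H t)) t := fun t ht =>
    hasDerivAt_systemicRisk_sum (hP t ht) (hΛ t ht) (hH t ht)
  have hZ_zero : EqOn (fun s => P s + Λ s + 2 * H s) 0 (Icc 0 T) :=
    eqOn_zero_of_hasDerivAt_smul_of_eq_zero_right
      (fun t ht => (hZ t ht).continuousAt.continuousWithinAt) hZ
      (by rw [hPT, hΛT, hHT]; ring)
  intro t ht
  have hsum : Λ t + 2 * H t = -P t := by
    have hZt : P t + Λ t + 2 * H t = 0 := hZ_zero ht
    linarith
  exact ⟨hsum, fun x xbar => by rw [hsum]; ring⟩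

/-- in the systemic risk LQ model, if `(P, Λ, H)` solve on `[0,T]`
the ODE system `0 = Ṗ − (P+q)² + ε₀`, `P(T) = c`;
`0 = Λ̇ + (Λ+H)² − (H−q)² − 2Λ(P+Λ+2H) + ε₀`, `Λ(T) = c`;
`0 = Ḣ − (P+q)(H−q) − H(P+Λ+2H) − ε₀`, `H(T) = −c`, then
`Λ(t) + 2H(t) = −P(t)` on `[0,T]`, and consequently the feedback control
`û(t,x,x̄) = −[(P+q)x + (Λ+2H−q)x̄]` equals `(P(t)+q)(x̄ − x)`. -/
theorem systemic_risk_Z1_eq_negP (T q ε₀ c : ℝ) (hT : 0 < T)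
    (hq : 0 < q) (hε₀ : 0 < ε₀) (hc : 0 < c) (hqε : q ^ 2 ≤ ε₀)
    (P Λ H : ℝ → ℝ)
    (hP : ∀ t ∈ Icc (0 : ℝ) T, HasDerivAt P ((P t + q) ^ 2 - ε₀) t)
    (hPT : P T = c)
    (hΛ : ∀ t ∈ Icc (0 : ℝ) T, HasDerivAt Λ
      (-((Λ t + H t) ^ 2) + (H t - q) ^ 2 + 2 * Λ t * (P t + Λ t + 2 * H t) - ε₀) t)
    (hΛT : Λ T = c)
    (hH : ∀ t ∈ Icc (0 : ℝ) T, HasDerivAt H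
      ((P t + q) * (H t - q) + H t * (P t + Λ t + 2 * H t) + ε₀) t)
    (hHT : H T = -c) :
    ∀ t ∈ Icc (0 : ℝ) T,
      Λ t + 2 * H t = -P t
      ∧ ∀ x xbar : ℝ,
          -((P t + q) * x + (Λ t + 2 * H t - q) * xbar)
            = (P t + q) * (xbar - x) :=
  systemic_risk_Z1_eq_negP_general T q ε₀ c P Λ H hP hPT hΛ hΛT hH hHT
end

section
/- Let N ≥ 2 and let π₁, π₂ solve on [0,T] the coupled scalar ODE system: 0 = π̇₁ − (π₁+q)² − (π₂ − q/(N−1))²(N−1) + ε₀N/(N−1), with π₁(T) = cN/(N−1); 0 = π̇₂ − 2(π₁+q)(π₂ − q/(N−1)) − (π₂ − q/(N−1))²(N−2) − ε₀N/(N−1)², with π₂(T) = −cN/(N−1)². Let P_d solve 0 = Ṗ_d − (P_d+q)² + ε₀, P_d(T) = c. Then sup_{0≤t≤T}|π₁(t) − P_d(t)| = O(1/N) and sup_{0≤t≤T}|(N−1)π₂(t) + P_d(t)| = O(1/N) as N → ∞. -/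
/-!
The combination `S = π₁ + (N - 1) π₂` solves `S' = S²` with `S(T) = 0`, so it vanishes
identically. Hence `π₁` solves the limiting equation of `P_d` with its right-hand side scaled by
`μ = N / (N - 1) = 1 + 1 / (N - 1)` and terminal value `μ c`. Barrier arguments confine every such
solution with `μ ∈ [1, 2]` to a fixed strip, and Grönwall's inequality, run backward from `T`, then
bounds `π₁ - P_d` by a constant times `μ - 1`.
-/

open Set

section BackwardInTime

variable {f f' : ℝ → ℝ} {a b : ℝ}

lemma sub_mem_Icc_zero_sub {t : ℝ} (ht : t ∈ Icc a b) : b - t ∈ Icc 0 (b - a) :=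
  ⟨by linarith [ht.2], by linarith [ht.1]⟩

lemma sub_mem_Icc_of_mem_Icc_zero_sub {s : ℝ} (hs : s ∈ Icc 0 (b - a)) : b - s ∈ Icc a b :=
  ⟨by linarith [hs.2], by linarith [hs.1]⟩

lemma continuousOn_comp_const_sub_of_hasDerivAt (hf : ∀ t ∈ Icc a b, HasDerivAt f (f' t) t) :
    ContinuousOn (fun s ↦ f (b - s)) (Icc 0 (b - a)) := fun s hs ↦
  ((hf _ (sub_mem_Icc_of_mem_Icc_zero_sub hs)).comp_const_sub b s).continuousAt.continuousWithinAt

lemma hasDerivWithinAt_comp_const_sub_of_hasDerivAt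
    (hf : ∀ t ∈ Icc a b, HasDerivAt f (f' t) t) :
    ∀ s ∈ Ico 0 (b - a), HasDerivWithinAt (fun s ↦ f (b - s)) (-f' (b - s)) (Ici s) s :=
  fun s hs ↦ ((hf _ (sub_mem_Icc_of_mem_Icc_zero_sub (Ico_subset_Icc_self hs))).comp_const_sub
    b s).hasDerivWithinAt

theorem image_le_of_le_right_of_deriv_pos {M : ℝ} (hf : ∀ t ∈ Icc a b, HasDerivAt f (f' t) t)
    (hb : f b ≤ M) (hM : ∀ t ∈ Icc a b, f t = M → 0 < f' t) : ∀ t ∈ Icc a b, f t ≤ M := by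
  intro t ht
  simpa using image_le_of_deriv_right_lt_deriv_boundary (B := fun _ ↦ M) (B' := fun _ ↦ 0)
    (continuousOn_comp_const_sub_of_hasDerivAt hf)
    (hasDerivWithinAt_comp_const_sub_of_hasDerivAt hf)
    (by simpa using hb) (fun _ ↦ hasDerivAt_const _ _)
    (fun s hs hfs ↦
      neg_neg_of_pos (hM _ (sub_mem_Icc_of_mem_Icc_zero_sub (Ico_subset_Icc_self hs)) hfs))
    (sub_mem_Icc_zero_sub ht)

theorem le_image_of_le_right_of_deriv_neg {M : ℝ} (hf : ∀ t ∈ Icc a b, HasDerivAt f (f' t) t)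
    (hb : M ≤ f b) (hM : ∀ t ∈ Icc a b, f t = M → f' t < 0) : ∀ t ∈ Icc a b, M ≤ f t := by
  intro t ht
  have := image_le_of_le_right_of_deriv_pos (f := -f) (M := -M) (fun s hs ↦ (hf s hs).neg)
    (by simpa using hb) (fun s hs hfs ↦ by simpa using hM s hs (neg_inj.mp hfs)) t ht
  simpa using this

theorem abs_le_gronwallBound_of_abs_deriv_le_of_right {δ K ε : ℝ}
    (hf : ∀ t ∈ Icc a b, HasDerivAt f (f' t) t) (hb : |f b| ≤ δ)
    (bound : ∀ t ∈ Icc a b, |f' t| ≤ K * |f t| + ε) :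
    ∀ t ∈ Icc a b, |f t| ≤ gronwallBound δ K ε (b - t) := by
  intro t ht
  simpa using norm_le_gronwallBound_of_norm_deriv_right_le
    (continuousOn_comp_const_sub_of_hasDerivAt hf)
    (hasDerivWithinAt_comp_const_sub_of_hasDerivAt hf)
    (by simpa using hb)
    (fun s hs ↦ by simpa using bound _ (sub_mem_Icc_of_mem_Icc_zero_sub (Ico_subset_Icc_self hs)))
    _ (sub_mem_Icc_zero_sub ht)

theorem eq_zero_of_hasDerivAt_sq_of_right_eq_zero (hf : ∀ t ∈ Icc a b, HasDerivAt f (f t ^ 2) t)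
    (hb : f b = 0) : ∀ t ∈ Icc a b, f t = 0 := by
  obtain ⟨K, hK⟩ := isCompact_Icc.exists_bound_of_continuousOn
    fun t ht ↦ (hf t ht).continuousAt.continuousWithinAt
  intro t ht
  have := abs_le_gronwallBound_of_abs_deriv_le_of_right (K := K) (δ := 0) (ε := 0) hf
    (by simp [hb]) (fun s hs ↦ by
      rw [abs_pow, sq, add_zero]
      exact mul_le_mul_of_nonneg_right (hK s hs) (abs_nonneg _)) t ht
  rwa [gronwallBound_ε0_δ0, abs_nonpos_iff] at this

end BackwardInTime

lemma gronwallBound_mul (r δ K ε x : ℝ) :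
    gronwallBound (r * δ) K (r * ε) x = r * gronwallBound δ K ε x := by
  unfold gronwallBound
  split_ifs <;> ring

section ScalarRiccati

variable {q ε₀ c μ t₀ T : ℝ} {a Pd : ℝ → ℝ}

/-- The right-hand side is negative at the level `-q` and positive at the level `2 c + √ε₀`, so
neither level can be crossed backward in time from `a T = μ c`. -/
theorem riccati_add_mem_Icc (hq : 0 ≤ q) (hε₀ : 0 < ε₀) (hc : 0 < c) (hμ₀ : 0 < μ) (hμ₂ : μ ≤ 2)
    (ha : ∀ t ∈ Icc t₀ T, HasDerivAt a (μ * ((a t + q) ^ 2 - ε₀)) t) (haT : a T = μ * c) :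
    ∀ t ∈ Icc t₀ T, a t + q ∈ Icc 0 (2 * c + q + √ε₀) := by
  have hsqrt := Real.sq_sqrt hε₀.le
  have lower := le_image_of_le_right_of_deriv_neg (M := -q) ha (by nlinarith)
    (fun t _ hat ↦ by rw [hat]; nlinarith)
  have upper := image_le_of_le_right_of_deriv_pos (M := 2 * c + √ε₀) ha
    (by nlinarith [Real.sqrt_nonneg ε₀]) (fun t _ hat ↦ by
      rw [hat]; exact mul_pos hμ₀ (by nlinarith [Real.sqrt_nonneg ε₀]))
  exact fun t ht ↦ ⟨by linarith [lower t ht], by linarith [upper t ht]⟩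

lemma abs_mul_sq_sub_sub_sq_sub_le {x y R P : ℝ} (hε₀ : 0 ≤ ε₀) (hμ : 1 ≤ μ) (hx : x ∈ Icc 0 R)
    (hy : |y| ≤ P) :
    |μ * (x ^ 2 - ε₀) - (y ^ 2 - ε₀)| ≤ (R + P) * |x - y| + (μ - 1) * (R ^ 2 + ε₀) := by
  have hx₂ : |x ^ 2 - ε₀| ≤ R ^ 2 + ε₀ := abs_le.mpr
    ⟨by nlinarith [hx.1], by nlinarith [mul_le_mul hx.2 hx.2 hx.1 (hx.1.trans hx.2)]⟩
  have hxy : |x + y| ≤ R + P :=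
    (abs_add_le x y).trans (add_le_add (abs_le.mpr ⟨by linarith [hx.1, hx.2], hx.2⟩) hy)
  calc |μ * (x ^ 2 - ε₀) - (y ^ 2 - ε₀)| = |(x + y) * (x - y) + (μ - 1) * (x ^ 2 - ε₀)| := by
        ring_nf
    _ ≤ |(x + y) * (x - y)| + |(μ - 1) * (x ^ 2 - ε₀)| := abs_add_le _ _
    _ = |x + y| * |x - y| + (μ - 1) * |x ^ 2 - ε₀| := by
        rw [abs_mul, abs_mul, abs_of_nonneg (sub_nonneg.mpr hμ)]
    _ ≤ (R + P) * |x - y| + (μ - 1) * (R ^ 2 + ε₀) := by gcongr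

theorem exists_abs_sub_le_of_riccati (hq : 0 ≤ q) (hε₀ : 0 < ε₀) (hc : 0 < c)
    (hPd : ∀ t ∈ Icc t₀ T, HasDerivAt Pd ((Pd t + q) ^ 2 - ε₀) t) (hPdT : Pd T = c) :
    ∃ C, ∀ μ, 1 ≤ μ → μ ≤ 2 → ∀ a : ℝ → ℝ,
      (∀ t ∈ Icc t₀ T, HasDerivAt a (μ * ((a t + q) ^ 2 - ε₀)) t) → a T = μ * c →
      ∀ t ∈ Icc t₀ T, |a t - Pd t| ≤ (μ - 1) * C := by
  obtain ⟨P, hP⟩ := isCompact_Icc.exists_bound_of_continuousOn (f := fun t ↦ Pd t + q)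
    fun t ht ↦ ((hPd t ht).continuousAt.add continuousAt_const).continuousWithinAt
  set R := 2 * c + q + √ε₀
  refine ⟨gronwallBound c (R + P) (R ^ 2 + ε₀) (T - t₀), fun μ hμ₁ hμ₂ a ha haT t ht ↦ ?_⟩
  have haq := riccati_add_mem_Icc hq hε₀ hc (by linarith) hμ₂ ha haT
  have hP₀ : 0 ≤ P := (abs_nonneg _).trans (hP t ht)
  have hR₀ : 0 ≤ R := (haq t ht).1.trans (haq t ht).2
  calc |a t - Pd t|
      ≤ gronwallBound ((μ - 1) * c) (R + P) ((μ - 1) * (R ^ 2 + ε₀)) (T - t) := by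
        refine abs_le_gronwallBound_of_abs_deriv_le_of_right (fun s hs ↦ (ha s hs).sub (hPd s hs))
          ?_ (fun s hs ↦ ?_) t ht
        · show |a T - Pd T| ≤ _
          rw [haT, hPdT, ← sub_one_mul, abs_of_nonneg (by nlinarith)]
        · simpa using abs_mul_sq_sub_sub_sq_sub_le hε₀.le hμ₁ (haq s hs) (hP s hs)
    _ = (μ - 1) * gronwallBound c (R + P) (R ^ 2 + ε₀) (T - t) := gronwallBound_mul ..
    _ ≤ (μ - 1) * gronwallBound c (R + P) (R ^ 2 + ε₀) (T - t₀) :=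
        mul_le_mul_of_nonneg_left
          (gronwallBound_mono hc.le (by positivity) (by positivity) (by linarith [ht.1]))
          (by linarith)

end ScalarRiccati

section NAgentSystem

variable {q ε₀ c N t₀ T : ℝ} {π₁ π₂ : ℝ → ℝ}

theorem add_mul_eq_zero_of_riccati_system (hN : N ≠ 1)
    (h₁ : ∀ t ∈ Icc t₀ T, HasDerivAt π₁
      ((π₁ t + q) ^ 2 + (π₂ t - q / (N - 1)) ^ 2 * (N - 1) - ε₀ * N / (N - 1)) t)
    (h₁T : π₁ T = c * N / (N - 1))
    (h₂ : ∀ t ∈ Icc t₀ T, HasDerivAt π₂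
      (2 * (π₁ t + q) * (π₂ t - q / (N - 1)) + (π₂ t - q / (N - 1)) ^ 2 * (N - 2)
        + ε₀ * N / (N - 1) ^ 2) t)
    (h₂T : π₂ T = -(c * N / (N - 1) ^ 2)) :
    ∀ t ∈ Icc t₀ T, π₁ t + (N - 1) * π₂ t = 0 := by
  have hN₁ : N - 1 ≠ 0 := sub_ne_zero.mpr hN
  refine eq_zero_of_hasDerivAt_sq_of_right_eq_zero (fun t ht ↦ ?_) ?_
  · refine ((h₁ t ht).add ((h₂ t ht).const_mul (N - 1))).congr_deriv ?_
    field_simp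
    ring
  · rw [h₁T, h₂T]
    field_simp
    ring

theorem hasDerivAt_of_riccati_system_of_add_mul_eq_zero (hN : N ≠ 1) {t : ℝ}
    (h₁ : HasDerivAt π₁
      ((π₁ t + q) ^ 2 + (π₂ t - q / (N - 1)) ^ 2 * (N - 1) - ε₀ * N / (N - 1)) t)
    (hsum : π₁ t + (N - 1) * π₂ t = 0) :
    HasDerivAt π₁ (N / (N - 1) * ((π₁ t + q) ^ 2 - ε₀)) t := by
  have hN₁ : N - 1 ≠ 0 := sub_ne_zero.mpr hN
  have hπ₂ : π₂ t = -π₁ t / (N - 1) := by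
    rw [eq_div_iff hN₁]
    linarith
  refine h₁.congr_deriv ?_
  rw [hπ₂]
  field_simp
  ring

end NAgentSystem

lemma div_sub_one_sub_one_mul_le {N C : ℝ} (hN : 2 ≤ N) (hC : 0 ≤ C) :
    (N / (N - 1) - 1) * C ≤ 2 * C / N := by
  have hN₁ : N - 1 ≠ 0 := by linarith
  rw [show N / (N - 1) - 1 = 1 / (N - 1) by field_simp; ring, one_div_mul_eq_div,
    div_le_div_iff₀ (by linarith) (by linarith)]
  nlinarith

theorem riccati_asymptotics_general (T q ε₀ c : ℝ)
    (hq : 0 < q) (hε₀ : 0 < ε₀) (hc : 0 < c)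
    (Pd : ℝ → ℝ)
    (hPd : ∀ t ∈ Icc (0 : ℝ) T, HasDerivAt Pd ((Pd t + q) ^ 2 - ε₀) t)
    (hPdT : Pd T = c) :
    ∃ C : ℝ, ∀ (N : ℕ), 2 ≤ N → ∀ π₁ π₂ : ℝ → ℝ,
      -- 0 = π̇₁ − (π₁+q)² − (π₂ − q/(N−1))²(N−1) + ε₀N/(N−1)
      (∀ t ∈ Icc (0 : ℝ) T, HasDerivAt π₁
        ((π₁ t + q) ^ 2 + (π₂ t - q / ((N : ℝ) - 1)) ^ 2 * ((N : ℝ) - 1)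
          - ε₀ * (N : ℝ) / ((N : ℝ) - 1)) t) →
      π₁ T = c * (N : ℝ) / ((N : ℝ) - 1) →
      -- 0 = π̇₂ − 2(π₁+q)(π₂ − q/(N−1)) − (π₂ − q/(N−1))²(N−2) − ε₀N/(N−1)²
      (∀ t ∈ Icc (0 : ℝ) T, HasDerivAt π₂
        (2 * (π₁ t + q) * (π₂ t - q / ((N : ℝ) - 1))
          + (π₂ t - q / ((N : ℝ) - 1)) ^ 2 * ((N : ℝ) - 2)
          + ε₀ * (N : ℝ) / ((N : ℝ) - 1) ^ 2) t) →
      π₂ T = -(c * (N : ℝ) / ((N : ℝ) - 1) ^ 2) →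
      ∀ t ∈ Icc (0 : ℝ) T,
        |π₁ t - Pd t| ≤ C / (N : ℝ)
        ∧ |((N : ℝ) - 1) * π₂ t + Pd t| ≤ C / (N : ℝ) := by
  obtain ⟨C, hC⟩ := exists_abs_sub_le_of_riccati hq.le hε₀ hc hPd hPdT
  refine ⟨2 * C, fun N hN π₁ π₂ h₁ h₁T h₂ h₂T t ht ↦ ?_⟩
  have hN₂ : (2 : ℝ) ≤ N := by exact_mod_cast hN
  have hN₁ : (N : ℝ) ≠ 1 := by linarith
  have hsum := add_mul_eq_zero_of_riccati_system hN₁ h₁ h₁T h₂ h₂T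
  have hμ₁ : 1 < (N : ℝ) / (N - 1) := by rw [one_lt_div (by linarith)]; linarith
  have hμ₂ : (N : ℝ) / (N - 1) ≤ 2 := by rw [div_le_iff₀ (by linarith)]; linarith
  have hπ₁ : |π₁ t - Pd t| ≤ (N / (N - 1) - 1) * C :=
    hC _ hμ₁.le hμ₂ π₁
      (fun s hs ↦ hasDerivAt_of_riccati_system_of_add_mul_eq_zero hN₁ (h₁ s hs) (hsum s hs))
      (by rw [h₁T]; ring) t ht
  have hC₀ : 0 ≤ C := nonneg_of_mul_nonneg_right ((abs_nonneg _).trans hπ₁) (by linarith)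
  have hπ₁' := hπ₁.trans (div_sub_one_sub_one_mul_le hN₂ hC₀)
  refine ⟨hπ₁', ?_⟩
  rwa [show (N - 1) * π₂ t + Pd t = -(π₁ t - Pd t) by linarith [hsum t ht], abs_neg]

/-- in the systemic risk model, let `(π₁, π₂)` solve the `N`-agent
Riccati system on `[0,T]` with the stated terminal conditions, and let `P_d`
solve the limiting Riccati equation `0 = Ṗ_d − (P_d+q)² + ε₀`, `P_d(T) = c`.
Then `sup_{0≤t≤T} |π₁(t) − P_d(t)| = O(1/N)` and
`sup_{0≤t≤T} |(N−1)π₂(t) + P_d(t)| = O(1/N)` as `N → ∞`, i.e. both are bounded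
by `C/N` for a constant `C` independent of `N`. -/
theorem riccati_asymptotics (T q ε₀ c : ℝ) (hT : 0 < T)
    (hq : 0 < q) (hε₀ : 0 < ε₀) (hc : 0 < c) (hqε : q ^ 2 ≤ ε₀)
    (Pd : ℝ → ℝ)
    (hPd : ∀ t ∈ Icc (0 : ℝ) T, HasDerivAt Pd ((Pd t + q) ^ 2 - ε₀) t)
    (hPdT : Pd T = c) :
    ∃ C : ℝ, ∀ (N : ℕ), 2 ≤ N → ∀ π₁ π₂ : ℝ → ℝ,
      -- 0 = π̇₁ − (π₁+q)² − (π₂ − q/(N−1))²(N−1) + ε₀N/(N−1)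
      (∀ t ∈ Icc (0 : ℝ) T, HasDerivAt π₁
        ((π₁ t + q) ^ 2 + (π₂ t - q / ((N : ℝ) - 1)) ^ 2 * ((N : ℝ) - 1)
          - ε₀ * (N : ℝ) / ((N : ℝ) - 1)) t) →
      π₁ T = c * (N : ℝ) / ((N : ℝ) - 1) →
      -- 0 = π̇₂ − 2(π₁+q)(π₂ − q/(N−1)) − (π₂ − q/(N−1))²(N−2) − ε₀N/(N−1)²
      (∀ t ∈ Icc (0 : ℝ) T, HasDerivAt π₂
        (2 * (π₁ t + q) * (π₂ t - q / ((N : ℝ) - 1))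
          + (π₂ t - q / ((N : ℝ) - 1)) ^ 2 * ((N : ℝ) - 2)
          + ε₀ * (N : ℝ) / ((N : ℝ) - 1) ^ 2) t) →
      π₂ T = -(c * (N : ℝ) / ((N : ℝ) - 1) ^ 2) →
      ∀ t ∈ Icc (0 : ℝ) T,
        |π₁ t - Pd t| ≤ C / (N : ℝ)
        ∧ |((N : ℝ) - 1) * π₂ t + Pd t| ≤ C / (N : ℝ) :=
  riccati_asymptotics_general T q ε₀ c hq hε₀ hc Pd hPd hPdT
end

section
/- Let ψ : P₂(ℝⁿ) → ℝ have first and second linear functional (flat) derivatives δ_μψ(μ; y) and δ_{μμ}ψ(μ; y, z), jointly continuous in their arguments, satisfying for each K > 0 the growth bound |δ_μψ(μ;y)|, |δ_{μμ}ψ(μ;y,z)| ≤ C_K(1+|y|²+|z|²) whenever W₂(μ, δ₀) ≤ K. Then the semi-symmetry identity holds: δ_{μμ}ψ(μ; y, z) = δ_{μμ}ψ(μ; z, y) + δ_μψ(μ; y) − δ_μψ(μ; z) for all μ ∈ P₂(ℝⁿ) and y, z ∈ ℝⁿ. -/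
/-!
Fix `μ ∈ P₂`, `y`, `z` and put `f(a, b) = ψ((1 - a - b) μ + a δ_y + b δ_z)`. Integrating the flat
derivative along segments of this two-parameter family of measures, and eliminating the
`μ`-integrals through the normalization `∫ δ_μψ(m; ·) dm = 0`, writes the second difference
`(f(t, t) - f(t, 0) - f(0, t) + f(0, 0)) / t²` as an average over `[0, t]` of a difference
quotient of `∂_b f`; by the joint continuity of the flat derivatives this converges to
`δ_{μμ}ψ(μ; z, y) + δ_μψ(μ; y)` as `t → 0⁺`. The second difference is symmetric in `y` and `z`,
so the same limit is `δ_{μμ}ψ(μ; y, z) + δ_μψ(μ; z)`.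
-/

open MeasureTheory ENNReal

variable {n : ℕ}

/-- Membership in `P₂(ℝⁿ)`: Borel probability measures with finite second moment. -/
def MemP2 (μ : Measure (EuclideanSpace ℝ (Fin n))) : Prop :=
  IsProbabilityMeasure μ ∧ (∫⁻ y, (‖y‖₊ : ℝ≥0∞) ^ 2 ∂μ) < ⊤

/-- The convex combination `μ + s(ν − μ) = (1−s)μ + sν` of two measures. -/
noncomputable def mix (s : ℝ) (μ ν : Measure (EuclideanSpace ℝ (Fin n))) :
    Measure (EuclideanSpace ℝ (Fin n)) :=
  ENNReal.ofReal (1 - s) • μ + ENNReal.ofReal s • ν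

/-- The 2-Wasserstein distance, via couplings. -/
noncomputable def W2 (μ ν : Measure (EuclideanSpace ℝ (Fin n))) : ℝ≥0∞ :=
  (⨅ π : {π : Measure (EuclideanSpace ℝ (Fin n) × EuclideanSpace ℝ (Fin n)) //
        π.map Prod.fst = μ ∧ π.map Prod.snd = ν},
      ∫⁻ p, ENNReal.ofReal (dist p.1 p.2 ^ 2) ∂π.1) ^ (1 / 2 : ℝ)

/-- `Dψ` is the flat (linear functional) derivative of `ψ` on `P₂(ℝⁿ)`:
`ψ(ν) − ψ(μ) = ∫₀¹ ∫ Dψ(μ + s(ν−μ); y) (ν−μ)(dy) ds` for all `μ, ν ∈ P₂`,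
together with the normalization `∫ Dψ(μ; y) μ(dy) = 0`. -/
def IsFlatDeriv (ψ : Measure (EuclideanSpace ℝ (Fin n)) → ℝ)
    (Dψ : Measure (EuclideanSpace ℝ (Fin n)) → EuclideanSpace ℝ (Fin n) → ℝ) :
    Prop :=
  (∀ μ ν, MemP2 μ → MemP2 ν →
    ψ ν - ψ μ = ∫ s in (0 : ℝ)..1,
      ((∫ y, Dψ (mix s μ ν) y ∂ν) - (∫ y, Dψ (mix s μ ν) y ∂μ)))
  ∧ ∀ μ, MemP2 μ → (∫ y, Dψ μ y ∂μ) = 0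

/-- Joint continuity (w.r.t. the `W₂` metric in the measure argument) of a
function of `(μ, y)`. -/
def JointContW2₁
    (F : Measure (EuclideanSpace ℝ (Fin n)) → EuclideanSpace ℝ (Fin n) → ℝ) :
    Prop :=
  ∀ μ, MemP2 μ → ∀ y : EuclideanSpace ℝ (Fin n), ∀ ε > (0 : ℝ), ∃ δ > (0 : ℝ),
    ∀ ν, MemP2 ν → ∀ y' : EuclideanSpace ℝ (Fin n),
      W2 μ ν < ENNReal.ofReal δ → dist y y' < δ → |F ν y' - F μ y| < ε

/-- Joint continuity (w.r.t. the `W₂` metric in the measure argument) of a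
function of `(μ, y, z)`. -/
def JointContW2₂
    (F : Measure (EuclideanSpace ℝ (Fin n)) → EuclideanSpace ℝ (Fin n) →
      EuclideanSpace ℝ (Fin n) → ℝ) : Prop :=
  ∀ μ, MemP2 μ → ∀ y z : EuclideanSpace ℝ (Fin n), ∀ ε > (0 : ℝ), ∃ δ > (0 : ℝ),
    ∀ ν, MemP2 ν → ∀ y' z' : EuclideanSpace ℝ (Fin n),
      W2 μ ν < ENNReal.ofReal δ → dist y y' < δ → dist z z' < δ →
      |F ν y' z' - F μ y z| < ε

open Filter Topology Set

lemma abs_intervalAverage_sub_le {h : ℝ → ℝ} {a c ε : ℝ} (ha : 0 < a)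
    (hh : IntervalIntegrable h volume 0 a) (hε : ∀ x ∈ Ioc 0 a, |h x - c| ≤ ε) :
    |(∫ x in 0..a, h x) / a - c| ≤ ε := by
  have hsub : (∫ x in 0..a, h x) / a - c = (∫ x in 0..a, (h x - c)) / a := by
    rw [intervalIntegral.integral_sub hh intervalIntegrable_const, intervalIntegral.integral_const,
      smul_eq_mul]
    field_simp
    ring
  have hbound := intervalIntegral.norm_integral_le_of_norm_le_const (a := 0) (b := a)
    (f := fun x => h x - c) (C := ε) (by simpa [uIoc_of_le ha.le] using hε)
  rw [hsub, abs_div, abs_of_pos ha, div_le_iff₀ ha]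
  simpa [abs_of_pos ha] using hbound

lemma tendsto_intervalAverage {α : Type*} {l : Filter α} {a : α → ℝ} {h : α → ℝ → ℝ} {c : ℝ}
    (ha : ∀ᶠ p in l, 0 < a p) (hint : ∀ᶠ p in l, IntervalIntegrable (h p) volume 0 (a p))
    (hunif : ∀ ε > 0, ∀ᶠ p in l, ∀ x ∈ Ioc 0 (a p), |h p x - c| ≤ ε) :
    Tendsto (fun p => (∫ x in 0..a p, h p x) / a p) l (𝓝 c) := by
  rw [Metric.tendsto_nhds]
  intro ε hε
  filter_upwards [ha, hint, hunif (ε / 2) (half_pos hε)] with p hp hpi hpu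
  exact (abs_intervalAverage_sub_le hp hpi hpu).trans_lt (half_lt_self hε)

lemma tendsto_intervalAverage_of_tendsto {Φ : ℝ → ℝ → ℝ} {c : ℝ}
    (hΦ : Tendsto (fun p : ℝ × ℝ => Φ p.1 p.2) (𝓝[Ici 0 ×ˢ Ici 0] 0) (𝓝 c))
    (hint : ∀ᶠ p : ℝ × ℝ in 𝓝[Ioi 0 ×ˢ Ici 0] 0, IntervalIntegrable (Φ · p.2) volume 0 p.1) :
    Tendsto (fun p : ℝ × ℝ => (∫ r in 0..p.1, Φ r p.2) / p.1) (𝓝[Ioi 0 ×ˢ Ici 0] 0) (𝓝 c) := by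
  refine tendsto_intervalAverage (h := fun (p : ℝ × ℝ) r => Φ r p.2) ?_ hint fun ε hε => ?_
  · filter_upwards [self_mem_nhdsWithin] with p hp using hp.1
  obtain ⟨δ, hδ, hΦδ⟩ := Metric.tendsto_nhdsWithin_nhds.1 hΦ ε hε
  filter_upwards [self_mem_nhdsWithin,
    eventually_nhdsWithin_of_eventually_nhds (Metric.ball_mem_nhds 0 hδ)] with p hp hpδ r hr
  refine (hΦδ (x := (r, p.2)) ⟨hr.1.le, hp.2⟩ ?_).le
  rw [Prod.dist_eq, Real.dist_eq, Real.dist_eq] at hpδ ⊢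
  simp only [Prod.fst_zero, Prod.snd_zero, sub_zero, abs_of_pos hr.1,
    abs_of_pos (mem_Ioi.1 hp.1)] at hpδ ⊢
  exact (max_le_max_right _ hr.2).trans_lt hpδ

lemma tendsto_double_diff_quotient {f L : ℝ → ℝ → ℝ} {c : ℝ}
    (hf : ∀ᶠ t in 𝓝[>] 0,
      f t t - f t 0 = ∫ s in 0..t, L t s ∧ f 0 t - f 0 0 = ∫ s in 0..t, L 0 s)
    (hL : ∀ᶠ t in 𝓝[>] 0,
      IntervalIntegrable (L t) volume 0 t ∧ IntervalIntegrable (L 0) volume 0 t)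
    (hG : Tendsto (fun p : ℝ × ℝ => (L p.1 p.2 - L 0 p.2) / p.1) (𝓝[Ioi 0 ×ˢ Ici 0] 0) (𝓝 c)) :
    Tendsto (fun t => (f t t - f t 0 - f 0 t + f 0 0) / t ^ 2) (𝓝[>] 0) (𝓝 c) := by
  have hav : Tendsto (fun t => (∫ s in 0..t, (L t s - L 0 s) / t) / t) (𝓝[>] 0) (𝓝 c) := by
    refine tendsto_intervalAverage (a := id) self_mem_nhdsWithin ?_ fun ε hε => ?_
    · filter_upwards [hL] with t ⟨h1, h2⟩ using (h1.sub h2).div_const t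
    obtain ⟨δ, hδ, hGδ⟩ := Metric.tendsto_nhdsWithin_nhds.1 hG ε hε
    filter_upwards [self_mem_nhdsWithin, Ioo_mem_nhdsGT hδ] with t ht htδ s hs
    refine (hGδ (x := (t, s)) ⟨ht, hs.1.le⟩ ?_).le
    rw [Prod.dist_eq, Real.dist_eq, Real.dist_eq]
    simp only [Prod.fst_zero, Prod.snd_zero, sub_zero, abs_of_pos (mem_Ioi.1 ht), abs_of_pos hs.1]
    exact max_lt htδ.2 (hs.2.trans_lt htδ.2)
  refine hav.congr' ?_
  filter_upwards [self_mem_nhdsWithin, hf, hL] with t ht ⟨h1, h2⟩ ⟨i1, i2⟩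
  rw [intervalIntegral.integral_div, intervalIntegral.integral_sub i1 i2, ← h1, ← h2]
  field_simp
  ring

lemma eventually_fst_add_snd_lt_one : ∀ᶠ p : ℝ × ℝ in 𝓝 0, p.1 + p.2 < 1 :=
  (by fun_prop : Continuous fun p : ℝ × ℝ => p.1 + p.2).tendsto' 0 0 (by simp) |>.eventually
    (gt_mem_nhds one_pos)

lemma eventually_quadrant_fst_add_snd_lt_one :
    ∀ᶠ p : ℝ × ℝ in 𝓝[Ioi 0 ×ˢ Ici 0] 0, 0 < p.1 ∧ 0 ≤ p.2 ∧ p.1 + p.2 < 1 := by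
  filter_upwards [self_mem_nhdsWithin,
    eventually_nhdsWithin_of_eventually_nhds eventually_fst_add_snd_lt_one] with p hp hp1
  exact ⟨hp.1, hp.2, hp1⟩

lemma nhdsWithin_Ioi_prod_Ici_le :
    𝓝[Ioi 0 ×ˢ Ici 0] (0 : ℝ × ℝ) ≤ 𝓝[Ici 0 ×ˢ Ici 0] 0 :=
  nhdsWithin_mono _ (prod_mono Ioi_subset_Ici_self le_rfl)

lemma tendsto_rpow_ofReal_mul_nhds_zero {α : Type*} {l : Filter α} {x : α → ℝ} {C : ℝ≥0∞}
    (hx : Tendsto x l (𝓝 0)) (hC : C ≠ ⊤) :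
    Tendsto (fun p => (ENNReal.ofReal (x p) * C) ^ (1 / 2 : ℝ)) l (𝓝 0) := by
  have h : Tendsto (fun p => ENNReal.ofReal (x p) * C) l (𝓝 0) := by
    simpa using ENNReal.Tendsto.mul_const (ENNReal.tendsto_ofReal hx) (Or.inr hC)
  have h0 : (0 : ℝ≥0∞) ^ (1 / 2 : ℝ) = 0 := ENNReal.zero_rpow_of_pos (by norm_num)
  exact h0 ▸ ((ENNReal.continuous_rpow_const (y := 1 / 2)).tendsto 0).comp h

section Coupling

variable {ρ σ : Measure (EuclideanSpace ℝ (Fin n))}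

noncomputable def pointCost (ρ : Measure (EuclideanSpace ℝ (Fin n)))
    (p : EuclideanSpace ℝ (Fin n)) : ℝ≥0∞ :=
  ∫⁻ x, ENNReal.ofReal (dist x p ^ 2) ∂ρ

lemma measurable_sqDist :
    Measurable fun q : EuclideanSpace ℝ (Fin n) × EuclideanSpace ℝ (Fin n) =>
      ENNReal.ofReal (dist q.1 q.2 ^ 2) := by
  fun_prop

lemma W2_le_of_coupling (π : Measure (EuclideanSpace ℝ (Fin n) × EuclideanSpace ℝ (Fin n)))
    (h1 : π.map Prod.fst = ρ) (h2 : π.map Prod.snd = σ) :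
    W2 ρ σ ≤ (∫⁻ q, ENNReal.ofReal (dist q.1 q.2 ^ 2) ∂π) ^ (1 / 2 : ℝ) :=
  ENNReal.rpow_le_rpow (iInf_le_of_le ⟨π, h1, h2⟩ le_rfl) (by norm_num)

lemma map_fst_map_diag (ρ : Measure (EuclideanSpace ℝ (Fin n))) :
    (ρ.map fun x => (x, x)).map Prod.fst = ρ := by
  rw [Measure.map_map (by fun_prop) (by fun_prop)]
  exact Measure.map_id

lemma map_snd_map_diag (ρ : Measure (EuclideanSpace ℝ (Fin n))) :
    (ρ.map fun x => (x, x)).map Prod.snd = ρ := by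
  rw [Measure.map_map (by fun_prop) (by fun_prop)]
  exact Measure.map_id

lemma lintegral_sqDist_map_diag (ρ : Measure (EuclideanSpace ℝ (Fin n))) :
    ∫⁻ q, ENNReal.ofReal (dist q.1 q.2 ^ 2) ∂(ρ.map fun x => (x, x)) = 0 := by
  rw [lintegral_map measurable_sqDist (by fun_prop)]
  simp

lemma map_fst_map_pair (ρ : Measure (EuclideanSpace ℝ (Fin n))) (p : EuclideanSpace ℝ (Fin n)) :
    (ρ.map fun x => (x, p)).map Prod.fst = ρ := by
  rw [Measure.map_map (by fun_prop) (by fun_prop)]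
  exact Measure.map_id

lemma map_snd_map_pair (ρ : Measure (EuclideanSpace ℝ (Fin n))) [IsProbabilityMeasure ρ]
    (p : EuclideanSpace ℝ (Fin n)) : (ρ.map fun x => (x, p)).map Prod.snd = Measure.dirac p := by
  rw [Measure.map_map (by fun_prop) (by fun_prop)]
  simp [Function.comp_def]

lemma lintegral_sqDist_map_pair (ρ : Measure (EuclideanSpace ℝ (Fin n)))
    (p : EuclideanSpace ℝ (Fin n)) :
    ∫⁻ q, ENNReal.ofReal (dist q.1 q.2 ^ 2) ∂(ρ.map fun x => (x, p)) = pointCost ρ p := by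
  rw [lintegral_map measurable_sqDist (by fun_prop), pointCost]

lemma W2_self : W2 ρ ρ = 0 := by
  refine le_antisymm ?_ zero_le
  refine (W2_le_of_coupling _ (map_fst_map_diag ρ) (map_snd_map_diag ρ)).trans_eq ?_
  rw [lintegral_sqDist_map_diag, ENNReal.zero_rpow_of_pos (by norm_num)]

lemma W2_comm (ρ σ : Measure (EuclideanSpace ℝ (Fin n))) : W2 ρ σ = W2 σ ρ := by
  suffices h : ∀ ρ σ : Measure (EuclideanSpace ℝ (Fin n)), W2 ρ σ ≤ W2 σ ρ from
    le_antisymm (h ρ σ) (h σ ρ)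
  intro ρ σ
  refine ENNReal.rpow_le_rpow (le_iInf fun π => ?_) (by norm_num)
  refine iInf_le_of_le ⟨π.1.map Prod.swap, ?_, ?_⟩ ?_
  · rw [Measure.map_map measurable_fst measurable_swap]; exact π.2.2
  · rw [Measure.map_map measurable_snd measurable_swap]; exact π.2.1
  · rw [lintegral_map measurable_sqDist measurable_swap]
    simp only [Prod.fst_swap, Prod.snd_swap, dist_comm, le_rfl]

lemma W2_le_pointCost [IsProbabilityMeasure ρ] (p : EuclideanSpace ℝ (Fin n)) :
    W2 ρ (Measure.dirac p) ≤ pointCost ρ p ^ (1 / 2 : ℝ) := by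
  simpa only [lintegral_sqDist_map_pair] using
    W2_le_of_coupling _ (map_fst_map_pair ρ p) (map_snd_map_pair ρ p)

lemma pointCost_lt_top (hρ : MemP2 ρ) (p : EuclideanSpace ℝ (Fin n)) : pointCost ρ p < ⊤ := by
  have := hρ.1
  have hle : ∀ x : EuclideanSpace ℝ (Fin n),
      ENNReal.ofReal (dist x p ^ 2) ≤ 2 * (‖x‖₊ : ℝ≥0∞) ^ 2 + ENNReal.ofReal (2 * ‖p‖ ^ 2) := by
    intro x
    have h : dist x p ^ 2 ≤ 2 * ‖x‖ ^ 2 + 2 * ‖p‖ ^ 2 := by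
      nlinarith [dist_le_norm_add_norm x p, dist_nonneg (x := x) (y := p), sq_nonneg (‖x‖ - ‖p‖)]
    refine (ENNReal.ofReal_le_ofReal h).trans_eq ?_
    rw [ENNReal.ofReal_add (by positivity) (by positivity), ENNReal.ofReal_mul zero_le_two,
      ENNReal.ofReal_pow (norm_nonneg x), ofReal_norm, enorm_eq_nnnorm, ENNReal.ofReal_ofNat]
  refine (lintegral_mono hle).trans_lt ?_
  rw [lintegral_add_right _ measurable_const, lintegral_const_mul' _ _ (by simp), lintegral_const,
    measure_univ, mul_one]
  have := hρ.2
  finiteness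

lemma exists_W2_dirac_zero_le (hρ : MemP2 ρ) :
    ∃ K > (0 : ℝ), W2 ρ (Measure.dirac 0) ≤ ENNReal.ofReal K := by
  have := hρ.1
  have hfin : W2 ρ (Measure.dirac 0) ≠ ⊤ := ((W2_le_pointCost 0).trans_lt
    (ENNReal.rpow_lt_top_of_nonneg (by norm_num) (pointCost_lt_top hρ 0).ne)).ne
  refine ⟨(W2 ρ (Measure.dirac 0)).toReal + 1, by positivity, ?_⟩
  calc W2 ρ (Measure.dirac 0) = ENNReal.ofReal (W2 ρ (Measure.dirac 0)).toReal :=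
        (ENNReal.ofReal_toReal hfin).symm
    _ ≤ _ := ENNReal.ofReal_le_ofReal (by linarith)

lemma integrable_of_abs_le_mul_add_sq {μ : Measure (EuclideanSpace ℝ (Fin n))} (hμ : MemP2 μ)
    {g : EuclideanSpace ℝ (Fin n) → ℝ} {C c : ℝ} (hg : Continuous g)
    (hbound : ∀ x, |g x| ≤ C * (c + ‖x‖ ^ 2)) : Integrable g μ := by
  have := hμ.1
  have hsq : Integrable (fun x : EuclideanSpace ℝ (Fin n) => ‖x‖ ^ 2) μ := by
    refine ⟨(continuous_norm.pow 2).aestronglyMeasurable, ?_⟩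
    simpa [HasFiniteIntegral, enorm_pow, enorm_eq_nnnorm] using hμ.2
  refine (((integrable_const c).add hsq).const_mul C).mono' hg.aestronglyMeasurable
    (Eventually.of_forall fun x => ?_)
  simpa [Real.norm_eq_abs] using hbound x

end Coupling

def W2ContinuousAt (G : Measure (EuclideanSpace ℝ (Fin n)) → ℝ)
    (ρ : Measure (EuclideanSpace ℝ (Fin n))) : Prop :=
  ∀ ε > (0 : ℝ), ∃ δ > (0 : ℝ), ∀ ν, MemP2 ν → W2 ρ ν < ENNReal.ofReal δ → |G ν - G ρ| < ε

section W2Continuity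

variable {ρ : Measure (EuclideanSpace ℝ (Fin n))}

lemma W2ContinuousAt.tendsto {G : Measure (EuclideanSpace ℝ (Fin n)) → ℝ}
    (hG : W2ContinuousAt G ρ) {α : Type*} {l : Filter α}
    {ν : α → Measure (EuclideanSpace ℝ (Fin n))} (hν : ∀ᶠ p in l, MemP2 (ν p))
    (hW : Tendsto (fun p => W2 ρ (ν p)) l (𝓝 0)) :
    Tendsto (fun p => G (ν p)) l (𝓝 (G ρ)) := by
  rw [Metric.tendsto_nhds]
  intro ε hε
  obtain ⟨δ, hδ, hGδ⟩ := hG ε hε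
  filter_upwards [hν, hW.eventually (gt_mem_nhds (ENNReal.ofReal_pos.2 hδ))] with p hp hWp
  exact hGδ _ hp hWp

lemma JointContW2₁.w2ContinuousAt
    {F : Measure (EuclideanSpace ℝ (Fin n)) → EuclideanSpace ℝ (Fin n) → ℝ}
    (hF : JointContW2₁ F) (hρ : MemP2 ρ) (y : EuclideanSpace ℝ (Fin n)) :
    W2ContinuousAt (F · y) ρ := by
  intro ε hε
  obtain ⟨δ, hδ, hFδ⟩ := hF ρ hρ y ε hε
  exact ⟨δ, hδ, fun ν hν hW => hFδ ν hν y hW (by simpa using hδ)⟩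

lemma JointContW2₁.continuous
    {F : Measure (EuclideanSpace ℝ (Fin n)) → EuclideanSpace ℝ (Fin n) → ℝ}
    (hF : JointContW2₁ F) (hρ : MemP2 ρ) : Continuous (F ρ) := by
  refine Metric.continuous_iff.2 fun y ε hε => ?_
  obtain ⟨δ, hδ, hFδ⟩ := hF ρ hρ y ε hε
  exact ⟨δ, hδ, fun y' hy' => hFδ ρ hρ y' (by simpa [W2_self] using hδ) (by rwa [dist_comm])⟩

lemma JointContW2₂.w2ContinuousAt
    {F : Measure (EuclideanSpace ℝ (Fin n)) → EuclideanSpace ℝ (Fin n) →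
      EuclideanSpace ℝ (Fin n) → ℝ}
    (hF : JointContW2₂ F) (hρ : MemP2 ρ) (y z : EuclideanSpace ℝ (Fin n)) :
    W2ContinuousAt (F · y z) ρ := by
  intro ε hε
  obtain ⟨δ, hδ, hFδ⟩ := hF ρ hρ y z ε hε
  exact ⟨δ, hδ, fun ν hν hW => hFδ ν hν y z hW (by simpa using hδ) (by simpa using hδ)⟩

lemma JointContW2₂.continuous
    {F : Measure (EuclideanSpace ℝ (Fin n)) → EuclideanSpace ℝ (Fin n) →
      EuclideanSpace ℝ (Fin n) → ℝ}
    (hF : JointContW2₂ F) (hρ : MemP2 ρ) (y : EuclideanSpace ℝ (Fin n)) : Continuous (F ρ y) := by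
  refine Metric.continuous_iff.2 fun z ε hε => ?_
  obtain ⟨δ, hδ, hFδ⟩ := hF ρ hρ y z ε hε
  exact ⟨δ, hδ, fun z' hz' =>
    hFδ ρ hρ y z' (by simpa [W2_self] using hδ) (by simpa using hδ) (by rwa [dist_comm])⟩

end W2Continuity

lemma ofReal_smul_add_ofReal_smul {α : Type*} [MeasurableSpace α] {p q : ℝ} (hp : 0 ≤ p)
    (hq : 0 ≤ q) (ν : Measure α) :
    ENNReal.ofReal p • ν + ENNReal.ofReal q • ν = ENNReal.ofReal (p + q) • ν := by
  rw [← add_smul, ENNReal.ofReal_add hp hq]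

noncomputable def diracMix (μ : Measure (EuclideanSpace ℝ (Fin n))) (y z : EuclideanSpace ℝ (Fin n))
    (a b : ℝ) : Measure (EuclideanSpace ℝ (Fin n)) :=
  ENNReal.ofReal (1 - a - b) • μ + ENNReal.ofReal a • Measure.dirac y +
    ENNReal.ofReal b • Measure.dirac z

section diracMix

variable {μ : Measure (EuclideanSpace ℝ (Fin n))} {y z : EuclideanSpace ℝ (Fin n)}

@[simp]
lemma diracMix_zero_zero (μ : Measure (EuclideanSpace ℝ (Fin n))) (y z : EuclideanSpace ℝ (Fin n)) :
    diracMix μ y z 0 0 = μ := by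
  simp [diracMix]

lemma diracMix_comm (a b : ℝ) : diracMix μ z y b a = diracMix μ y z a b := by
  rw [diracMix, diracMix, sub_right_comm, add_right_comm]

lemma isProbabilityMeasure_diracMix [IsProbabilityMeasure μ] {a b : ℝ} (ha : 0 ≤ a)
    (hb : 0 ≤ b) (hab : a + b ≤ 1) : IsProbabilityMeasure (diracMix μ y z a b) := by
  constructor
  simp only [diracMix, Measure.add_apply, Measure.smul_apply, measure_univ, smul_eq_mul, mul_one]
  rw [← ENNReal.ofReal_add (by linarith) ha, ← ENNReal.ofReal_add (by linarith) hb,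
    show 1 - a - b + a + b = 1 by ring, ENNReal.ofReal_one]

lemma memP2_diracMix (hμ : MemP2 μ) {a b : ℝ} (ha : 0 ≤ a) (hb : 0 ≤ b) (hab : a + b ≤ 1) :
    MemP2 (diracMix μ y z a b) := by
  have := hμ.1
  refine ⟨isProbabilityMeasure_diracMix ha hb hab, ?_⟩
  simp only [diracMix, lintegral_add_measure, lintegral_smul_measure, lintegral_dirac, smul_eq_mul]
  have := hμ.2
  finiteness

lemma mix_diracMix {r t b : ℝ} (hr : 0 ≤ r) (hr1 : r ≤ 1) (ht : 0 ≤ t) (hb : 0 ≤ b)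
    (htb : t + b ≤ 1) :
    mix r (diracMix μ y z 0 b) (diracMix μ y z t b) = diracMix μ y z (r * t) b := by
  have h1r : 0 ≤ 1 - r := by linarith
  have hz : ENNReal.ofReal b • Measure.dirac z = ENNReal.ofReal ((1 - r) * b) • Measure.dirac z +
      ENNReal.ofReal (r * b) • Measure.dirac z := by
    rw [ofReal_smul_add_ofReal_smul (by positivity) (by positivity)]
    ring_nf
  simp only [mix, diracMix, smul_add, smul_smul, ← ENNReal.ofReal_mul h1r, ← ENNReal.ofReal_mul hr,
    ENNReal.ofReal_zero, zero_smul, add_zero]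
  rw [show 1 - r * t - b = (1 - r) * (1 - 0 - b) + r * (1 - t - b) by ring,
    ← ofReal_smul_add_ofReal_smul (by nlinarith) (by nlinarith), hz]
  abel

lemma integral_diracMix {g : EuclideanSpace ℝ (Fin n) → ℝ} (hg : Integrable g μ) {a b : ℝ}
    (ha : 0 ≤ a) (hb : 0 ≤ b) (hab : a + b ≤ 1) :
    ∫ x, g x ∂(diracMix μ y z a b) = (1 - a - b) * ∫ x, g x ∂μ + a * g y + b * g z := by
  have hy : Integrable g (Measure.dirac y) := integrable_dirac (by simp)
  have hz : Integrable g (Measure.dirac z) := integrable_dirac (by simp)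
  rw [diracMix, integral_add_measure ((hg.smul_measure ENNReal.ofReal_ne_top).add_measure
      (hy.smul_measure ENNReal.ofReal_ne_top)) (hz.smul_measure ENNReal.ofReal_ne_top),
    integral_add_measure (hg.smul_measure ENNReal.ofReal_ne_top)
      (hy.smul_measure ENNReal.ofReal_ne_top)]
  simp only [integral_smul_measure, integral_dirac, ENNReal.toReal_ofReal ha,
    ENNReal.toReal_ofReal hb, ENNReal.toReal_ofReal (by linarith : 0 ≤ 1 - a - b), smul_eq_mul]

/-- The coupling keeps the common mass `(1 - a' - b') μ + a δ_y + b δ_z` in place and moves the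
excess `(a' - a) μ` to `y` and `(b' - b) μ` to `z`. -/
lemma W2_diracMix_le [IsProbabilityMeasure μ] {a b a' b' : ℝ} (ha : 0 ≤ a) (hb : 0 ≤ b)
    (haa' : a ≤ a') (hbb' : b ≤ b') (hab' : a' + b' ≤ 1) :
    W2 (diracMix μ y z a b) (diracMix μ y z a' b') ≤
      (ENNReal.ofReal (a' - a) * pointCost μ y + ENNReal.ofReal (b' - b) * pointCost μ z) ^
        (1 / 2 : ℝ) := by
  set ν₀ := ENNReal.ofReal (1 - a' - b') • μ + ENNReal.ofReal a • Measure.dirac y +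
    ENNReal.ofReal b • Measure.dirac z
  set π := ν₀.map (fun x => (x, x)) + ENNReal.ofReal (a' - a) • μ.map (fun x => (x, y)) +
    ENNReal.ofReal (b' - b) • μ.map (fun x => (x, z))
  have hfst : π.map Prod.fst = diracMix μ y z a b := by
    have hμ : ENNReal.ofReal (1 - a - b) • μ = ENNReal.ofReal (1 - a' - b') • μ +
        ENNReal.ofReal (a' - a) • μ + ENNReal.ofReal (b' - b) • μ := by
      rw [ofReal_smul_add_ofReal_smul (by linarith) (by linarith),
        ofReal_smul_add_ofReal_smul (by linarith) (by linarith)]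
      ring_nf
    simp only [π, ν₀, Measure.map_add _ _ measurable_fst, Measure.map_smul, map_fst_map_diag,
      map_fst_map_pair]
    rw [diracMix, hμ]
    abel
  have hsnd : π.map Prod.snd = diracMix μ y z a' b' := by
    have hy : ENNReal.ofReal a' • Measure.dirac y =
        ENNReal.ofReal a • Measure.dirac y + ENNReal.ofReal (a' - a) • Measure.dirac y := by
      rw [ofReal_smul_add_ofReal_smul ha (by linarith)]
      ring_nf
    have hz : ENNReal.ofReal b' • Measure.dirac z =
        ENNReal.ofReal b • Measure.dirac z + ENNReal.ofReal (b' - b) • Measure.dirac z := by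
      rw [ofReal_smul_add_ofReal_smul hb (by linarith)]
      ring_nf
    simp only [π, ν₀, Measure.map_add _ _ measurable_snd, Measure.map_smul, map_snd_map_diag,
      map_snd_map_pair]
    rw [diracMix, hy, hz]
    abel
  refine (W2_le_of_coupling π hfst hsnd).trans_eq ?_
  simp only [π, lintegral_add_measure, lintegral_smul_measure, lintegral_sqDist_map_diag,
    lintegral_sqDist_map_pair, smul_eq_mul, zero_add]

lemma W2_diracMix_fst_le [IsProbabilityMeasure μ] {a₀ a b : ℝ} (ha₀ : 0 ≤ a₀) (ha : 0 ≤ a)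
    (hb : 0 ≤ b) (ha₀b : a₀ + b ≤ 1) (hab : a + b ≤ 1) :
    W2 (diracMix μ y z a₀ b) (diracMix μ y z a b) ≤
      (ENNReal.ofReal |a - a₀| * pointCost μ y) ^ (1 / 2 : ℝ) := by
  rcases le_total a₀ a with h | h
  · simpa [abs_of_nonneg (sub_nonneg.2 h)] using W2_diracMix_le ha₀ hb h le_rfl hab
  · rw [W2_comm]
    simpa [abs_of_nonpos (sub_nonpos.2 h)] using W2_diracMix_le ha hb h le_rfl ha₀b

lemma tendsto_W2_diracMix_nhds_zero (hμ : MemP2 μ) :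
    Tendsto (fun p : ℝ × ℝ => W2 μ (diracMix μ y z p.1 p.2)) (𝓝[Ici 0 ×ˢ Ici 0] 0) (𝓝 0) := by
  have := hμ.1
  have hbound : Tendsto (fun p : ℝ × ℝ => (ENNReal.ofReal (p.1 + p.2) *
      (pointCost μ y + pointCost μ z)) ^ (1 / 2 : ℝ)) (𝓝[Ici 0 ×ˢ Ici 0] 0) (𝓝 0) :=
    tendsto_rpow_ofReal_mul_nhds_zero
      ((continuous_fst.add continuous_snd).tendsto' 0 0 (by simp) |>.mono_left nhdsWithin_le_nhds)
      (ENNReal.add_lt_top.2 ⟨pointCost_lt_top hμ y, pointCost_lt_top hμ z⟩).ne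
  refine tendsto_of_tendsto_of_tendsto_of_le_of_le' tendsto_const_nhds hbound
    (Eventually.of_forall fun _ => zero_le) ?_
  filter_upwards [self_mem_nhdsWithin,
    eventually_nhdsWithin_of_eventually_nhds eventually_fst_add_snd_lt_one]
    with p ⟨ha, hb⟩ hab
  refine (diracMix_zero_zero μ y z ▸ W2_diracMix_le le_rfl le_rfl ha hb hab.le).trans ?_
  refine ENNReal.rpow_le_rpow ?_ (by norm_num)
  rw [ENNReal.ofReal_add ha hb, add_mul]
  gcongr <;> simp

lemma tendsto_W2_diracMix_fst (hμ : MemP2 μ) {a₀ b : ℝ} (hb : 0 ≤ b) (ha₀ : a₀ ∈ Icc 0 (1 - b)) :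
    Tendsto (fun a => W2 (diracMix μ y z a₀ b) (diracMix μ y z a b)) (𝓝[Icc 0 (1 - b)] a₀)
      (𝓝 0) := by
  have := hμ.1
  have hbound : Tendsto (fun a => (ENNReal.ofReal |a - a₀| * pointCost μ y) ^ (1 / 2 : ℝ))
      (𝓝[Icc 0 (1 - b)] a₀) (𝓝 0) :=
    tendsto_rpow_ofReal_mul_nhds_zero
      ((continuous_id.sub continuous_const).abs.tendsto' a₀ 0 (by simp) |>.mono_left
        nhdsWithin_le_nhds) (pointCost_lt_top hμ y).ne
  refine tendsto_of_tendsto_of_tendsto_of_le_of_le' tendsto_const_nhds hbound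
    (Eventually.of_forall fun _ => zero_le) ?_
  filter_upwards [self_mem_nhdsWithin] with a ha
  exact W2_diracMix_fst_le ha₀.1 ha.1 hb (by linarith [ha₀.2]) (by linarith [ha.2])

lemma W2ContinuousAt.tendsto_diracMix {G : Measure (EuclideanSpace ℝ (Fin n)) → ℝ}
    (hG : W2ContinuousAt G μ) (hμ : MemP2 μ) :
    Tendsto (fun p : ℝ × ℝ => G (diracMix μ y z p.1 p.2)) (𝓝[Ici 0 ×ˢ Ici 0] 0) (𝓝 (G μ)) := by
  refine hG.tendsto ?_ (tendsto_W2_diracMix_nhds_zero hμ)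
  filter_upwards [self_mem_nhdsWithin,
    eventually_nhdsWithin_of_eventually_nhds eventually_fst_add_snd_lt_one]
    with p ⟨ha, hb⟩ hab
  exact memP2_diracMix hμ ha hb hab.le

lemma continuousOn_diracMix_fst {G : Measure (EuclideanSpace ℝ (Fin n)) → ℝ}
    (hG : ∀ ρ, MemP2 ρ → W2ContinuousAt G ρ) (hμ : MemP2 μ) {b : ℝ} (hb : 0 ≤ b) :
    ContinuousOn (fun a => G (diracMix μ y z a b)) (Icc 0 (1 - b)) := by
  have hmem : ∀ a ∈ Icc 0 (1 - b), MemP2 (diracMix μ y z a b) := fun a ha =>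
    memP2_diracMix hμ ha.1 hb (by linarith [ha.2])
  exact fun a₀ ha₀ => (hG _ (hmem a₀ ha₀)).tendsto
    (eventually_nhdsWithin_of_forall hmem) (tendsto_W2_diracMix_fst hμ hb ha₀)

end diracMix

/-- The partial derivative of `a ↦ F (diracMix μ y z a b)`: it is `DF(m; y) - ∫ DF(m) dμ` for
`m = diracMix μ y z a b`, with the `μ`-integral eliminated through `∫ DF(m) dm = 0`. -/
noncomputable def diracMixDeriv
    (DF : Measure (EuclideanSpace ℝ (Fin n)) → EuclideanSpace ℝ (Fin n) → ℝ)
    (μ : Measure (EuclideanSpace ℝ (Fin n))) (y z : EuclideanSpace ℝ (Fin n)) (a b : ℝ) : ℝ :=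
  DF (diracMix μ y z a b) y +
    (a * DF (diracMix μ y z a b) y + b * DF (diracMix μ y z a b) z) / (1 - a - b)

section diracMixDeriv

variable {μ : Measure (EuclideanSpace ℝ (Fin n))} {y z : EuclideanSpace ℝ (Fin n)}
  {DF : Measure (EuclideanSpace ℝ (Fin n)) → EuclideanSpace ℝ (Fin n) → ℝ}

lemma sub_integral_eq_diracMixDeriv {a b : ℝ} (ha : 0 ≤ a) (hb : 0 ≤ b) (hab : a + b < 1)
    (hint : Integrable (DF (diracMix μ y z a b)) μ)
    (hnorm : ∫ x, DF (diracMix μ y z a b) x ∂(diracMix μ y z a b) = 0) :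
    DF (diracMix μ y z a b) y - ∫ x, DF (diracMix μ y z a b) x ∂μ = diracMixDeriv DF μ y z a b := by
  rw [integral_diracMix hint ha hb hab.le] at hnorm
  have : 1 - a - b ≠ 0 := by linarith
  rw [diracMixDeriv]
  field_simp
  linarith

lemma IsFlatDeriv.sub_eq_integral_diracMixDeriv {F : Measure (EuclideanSpace ℝ (Fin n)) → ℝ}
    (hFD : IsFlatDeriv F DF) (hμ : MemP2 μ)
    (hint : ∀ ρ, MemP2 ρ → Integrable (DF ρ) μ) {t b : ℝ} (ht : 0 ≤ t) (hb : 0 ≤ b)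
    (htb : t + b < 1) :
    F (diracMix μ y z t b) - F (diracMix μ y z 0 b) =
      ∫ a in 0..t, diracMixDeriv DF μ y z a b := by
  rw [hFD.1 _ _ (memP2_diracMix hμ le_rfl hb (by linarith)) (memP2_diracMix hμ ht hb htb.le)]
  have hintegrand : EqOn (fun s => (∫ x, DF (mix s (diracMix μ y z 0 b) (diracMix μ y z t b)) x
        ∂(diracMix μ y z t b)) -
      ∫ x, DF (mix s (diracMix μ y z 0 b) (diracMix μ y z t b)) x ∂(diracMix μ y z 0 b))
      (fun s => t * diracMixDeriv DF μ y z (s * t) b) (uIcc 0 1) := by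
    intro s hs
    rw [uIcc_of_le zero_le_one] at hs
    have hst : 0 ≤ s * t := mul_nonneg hs.1 ht
    have hstb : s * t + b < 1 := by nlinarith [hs.2]
    have hmem := memP2_diracMix (y := y) (z := z) hμ hst hb hstb.le
    have hint' := hint _ hmem
    have hnorm := hFD.2 _ hmem
    simp only
    rw [mix_diracMix hs.1 hs.2 ht hb htb.le, integral_diracMix hint' ht hb htb.le,
      integral_diracMix hint' le_rfl hb (by linarith),
      ← sub_integral_eq_diracMixDeriv hst hb hstb hint' hnorm]
    ring
  rw [intervalIntegral.integral_congr hintegrand, intervalIntegral.integral_const_mul]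
  simpa using intervalIntegral.smul_integral_comp_mul_right
    (fun a => diracMixDeriv DF μ y z a b) t (a := 0) (b := 1)

lemma tendsto_diracMixDeriv (hμ : MemP2 μ) (hy : W2ContinuousAt (DF · y) μ)
    (hz : W2ContinuousAt (DF · z) μ) :
    Tendsto (fun p : ℝ × ℝ => diracMixDeriv DF μ y z p.1 p.2) (𝓝[Ici 0 ×ˢ Ici 0] 0)
      (𝓝 (DF μ y)) := by
  have hY := hy.tendsto_diracMix (y := y) (z := z) hμ
  have hZ := hz.tendsto_diracMix (y := y) (z := z) hμ
  have ha : Tendsto (fun p : ℝ × ℝ => p.1) (𝓝[Ici 0 ×ˢ Ici 0] 0) (𝓝 0) :=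
    tendsto_nhdsWithin_of_tendsto_nhds (continuous_fst.tendsto' 0 0 rfl)
  have hb : Tendsto (fun p : ℝ × ℝ => p.2) (𝓝[Ici 0 ×ˢ Ici 0] 0) (𝓝 0) :=
    tendsto_nhdsWithin_of_tendsto_nhds (continuous_snd.tendsto' 0 0 rfl)
  simpa [diracMixDeriv] using hY.add (((ha.mul hY).add (hb.mul hZ)).div
    ((tendsto_const_nhds.sub ha).sub hb) (by norm_num))

lemma continuousOn_diracMixDeriv (hDF : ∀ ρ, MemP2 ρ → ∀ p, W2ContinuousAt (DF · p) ρ)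
    (hμ : MemP2 μ) {b c : ℝ} (hb : 0 ≤ b) (hcb : c + b < 1) :
    ContinuousOn (fun a => diracMixDeriv DF μ y z a b) (Icc 0 c) := by
  have hsub : Icc 0 c ⊆ Icc 0 (1 - b) := Icc_subset_Icc le_rfl (by linarith)
  have hY := (continuousOn_diracMix_fst (y := y) (z := z) (hDF · · y) hμ hb).mono hsub
  have hZ := (continuousOn_diracMix_fst (y := y) (z := z) (hDF · · z) hμ hb).mono hsub
  exact hY.add (((continuousOn_id.mul hY).add (continuousOn_const.mul hZ)).div (by fun_prop)
    fun a ha => by linarith [ha.2])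

end diracMixDeriv

section SemiSymmetry

variable {μ : Measure (EuclideanSpace ℝ (Fin n))} {y z : EuclideanSpace ℝ (Fin n)}
  {Dψ : Measure (EuclideanSpace ℝ (Fin n)) → EuclideanSpace ℝ (Fin n) → ℝ}
  {D2ψ : Measure (EuclideanSpace ℝ (Fin n)) → EuclideanSpace ℝ (Fin n) →
    EuclideanSpace ℝ (Fin n) → ℝ}

lemma tendsto_slope_diracMix (hμ : MemP2 μ) (hD2 : IsFlatDeriv (Dψ · z) (D2ψ · z))
    (hcont2 : JointContW2₂ D2ψ)
    (hint : ∀ ρ, MemP2 ρ → Integrable (D2ψ ρ z) μ) :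
    Tendsto (fun p : ℝ × ℝ =>
        (Dψ (diracMix μ y z p.1 p.2) z - Dψ (diracMix μ y z 0 p.2) z) / p.1)
      (𝓝[Ioi 0 ×ˢ Ici 0] 0) (𝓝 (D2ψ μ z y)) := by
  refine (tendsto_intervalAverage_of_tendsto (tendsto_diracMixDeriv hμ
    (hcont2.w2ContinuousAt hμ z y) (hcont2.w2ContinuousAt hμ z z)) ?_).congr' ?_
  · filter_upwards [eventually_quadrant_fst_add_snd_lt_one] with p ⟨ht, hs, hts⟩
    exact (continuousOn_diracMixDeriv (fun ρ hρ w => hcont2.w2ContinuousAt hρ z w) hμ hs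
      hts).intervalIntegrable_of_Icc ht.le
  · filter_upwards [eventually_quadrant_fst_add_snd_lt_one] with p ⟨ht, hs, hts⟩
    rw [hD2.sub_eq_integral_diracMixDeriv hμ hint ht.le hs hts]

lemma tendsto_slope_diracMixDeriv (hμ : MemP2 μ) (hD2 : IsFlatDeriv (Dψ · z) (D2ψ · z))
    (hcont1 : JointContW2₁ Dψ) (hcont2 : JointContW2₂ D2ψ)
    (hint : ∀ ρ, MemP2 ρ → Integrable (D2ψ ρ z) μ) :
    Tendsto (fun p : ℝ × ℝ =>
        (diracMixDeriv Dψ μ z y p.2 p.1 - diracMixDeriv Dψ μ z y p.2 0) / p.1)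
      (𝓝[Ioi 0 ×ˢ Ici 0] 0) (𝓝 (D2ψ μ z y + Dψ μ y)) := by
  have hI := tendsto_slope_diracMix (y := y) hμ hD2 hcont2 hint
  have hY := ((hcont1.w2ContinuousAt hμ y).tendsto_diracMix (y := y) (z := z) hμ).mono_left
    nhdsWithin_Ioi_prod_Ici_le
  have hP := ((hcont1.w2ContinuousAt hμ z).tendsto_diracMix (y := y) (z := z) hμ).mono_left
    nhdsWithin_Ioi_prod_Ici_le
  have ht : Tendsto (fun p : ℝ × ℝ => p.1) (𝓝[Ioi 0 ×ˢ Ici 0] 0) (𝓝 0) :=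
    tendsto_nhdsWithin_of_tendsto_nhds (continuous_fst.tendsto' 0 0 rfl)
  have hs : Tendsto (fun p : ℝ × ℝ => p.2) (𝓝[Ioi 0 ×ˢ Ici 0] 0) (𝓝 0) :=
    tendsto_nhdsWithin_of_tendsto_nhds (continuous_snd.tendsto' 0 0 rfl)
  have hd₁ : Tendsto (fun p : ℝ × ℝ => 1 - p.2) (𝓝[Ioi 0 ×ˢ Ici 0] 0) (𝓝 (1 - 0)) :=
    tendsto_const_nhds.sub hs
  have hd₂ : Tendsto (fun p : ℝ × ℝ => 1 - p.1 - p.2) (𝓝[Ioi 0 ×ˢ Ici 0] 0) (𝓝 (1 - 0 - 0)) :=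
    (tendsto_const_nhds.sub ht).sub hs
  -- With `P`, `Y` the values of `Dψ (diracMix μ y z t s)` at `z`, `y` and `I` the slope in `hI`,
  -- the quotient equals `I / (1 - s) + Y / (1 - t - s) + s P / ((1 - t - s)(1 - s))`.
  have hlim := ((hI.div hd₁ (by norm_num)).add (hY.div hd₂ (by norm_num))).add
    ((hs.mul hP).div (hd₂.mul hd₁) (by norm_num))
  convert hlim.congr' ?_ using 2
  · simp
  filter_upwards [eventually_quadrant_fst_add_snd_lt_one] with p ⟨ht, hs, hts⟩
  have h1 : (1 : ℝ) - p.1 - p.2 ≠ 0 := by linarith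
  have h1' : (1 : ℝ) - p.2 - p.1 ≠ 0 := by linarith
  have h2 : (1 : ℝ) - p.2 ≠ 0 := by linarith
  have h3 : p.1 ≠ 0 := ne_of_gt ht
  simp only [Pi.div_apply, diracMixDeriv, diracMix_comm]
  field_simp
  ring

lemma tendsto_double_diff_quotient_diracMix {ψ : Measure (EuclideanSpace ℝ (Fin n)) → ℝ}
    (hμ : MemP2 μ) (hD1 : IsFlatDeriv ψ Dψ) (hD2 : IsFlatDeriv (Dψ · z) (D2ψ · z))
    (hcont1 : JointContW2₁ Dψ) (hcont2 : JointContW2₂ D2ψ)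
    (hint1 : ∀ ρ, MemP2 ρ → Integrable (Dψ ρ) μ)
    (hint2 : ∀ ρ, MemP2 ρ → Integrable (D2ψ ρ z) μ) :
    Tendsto (fun t => (ψ (diracMix μ y z t t) - ψ (diracMix μ y z t 0) -
        ψ (diracMix μ y z 0 t) + ψ μ) / t ^ 2) (𝓝[>] 0) (𝓝 (D2ψ μ z y + Dψ μ y)) := by
  have hexpand := fun {t b : ℝ} => hD1.sub_eq_integral_diracMixDeriv (y := z) (z := y) hμ hint1
    (t := t) (b := b)
  have hcontL := fun {b c : ℝ} => continuousOn_diracMixDeriv (y := z) (z := y)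
    (fun _ hρ w => hcont1.w2ContinuousAt hρ w) hμ (b := b) (c := c)
  refine (tendsto_double_diff_quotient (f := fun a b => ψ (diracMix μ y z a b))
    (L := fun a s => diracMixDeriv Dψ μ z y s a) ?_ ?_
    (tendsto_slope_diracMixDeriv hμ hD2 hcont1 hcont2 hint2)).congr fun t => by simp
  · filter_upwards [Ioo_mem_nhdsGT (show (0 : ℝ) < 1 / 2 by norm_num)] with t ⟨ht, ht'⟩
    constructor
    · simpa only [diracMix_comm] using hexpand ht.le ht.le (by linarith)
    · simpa only [diracMix_comm] using hexpand ht.le le_rfl (by linarith)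
  · filter_upwards [Ioo_mem_nhdsGT (show (0 : ℝ) < 1 / 2 by norm_num)] with t ⟨ht, ht'⟩
    exact ⟨(hcontL ht.le (by linarith)).intervalIntegrable_of_Icc ht.le,
      (hcontL le_rfl (by linarith)).intervalIntegrable_of_Icc ht.le⟩

end SemiSymmetry

/-- semi-symmetry of the second flat derivative: let
`ψ : P₂(ℝⁿ) → ℝ` have jointly continuous first and second flat derivatives
`δ_μψ(μ;y)` and `δ_{μμ}ψ(μ;y,z)` with the growth bound
`|δ_μψ|, |δ_{μμ}ψ| ≤ C_K(1+|y|²+|z|²)` on `{W₂(μ, δ₀) ≤ K}`.  Then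
`δ_{μμ}ψ(μ; y, z) = δ_{μμ}ψ(μ; z, y) + δ_μψ(μ; y) − δ_μψ(μ; z)`. -/
theorem flat_deriv_semi_symmetry
    (ψ : Measure (EuclideanSpace ℝ (Fin n)) → ℝ)
    (Dψ : Measure (EuclideanSpace ℝ (Fin n)) → EuclideanSpace ℝ (Fin n) → ℝ)
    (D2ψ : Measure (EuclideanSpace ℝ (Fin n)) → EuclideanSpace ℝ (Fin n) →
      EuclideanSpace ℝ (Fin n) → ℝ)
    (hD1 : IsFlatDeriv ψ Dψ)
    (hD2 : ∀ y, IsFlatDeriv (fun μ => Dψ μ y) (fun μ z => D2ψ μ y z))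
    (hcont1 : JointContW2₁ Dψ)
    (hcont2 : JointContW2₂ D2ψ)
    (hgrowth : ∀ K > (0 : ℝ), ∃ C_K : ℝ, ∀ μ, MemP2 μ →
      W2 μ (Measure.dirac 0) ≤ ENNReal.ofReal K →
      ∀ y z : EuclideanSpace ℝ (Fin n),
        |Dψ μ y| ≤ C_K * (1 + ‖y‖ ^ 2 + ‖z‖ ^ 2)
        ∧ |D2ψ μ y z| ≤ C_K * (1 + ‖y‖ ^ 2 + ‖z‖ ^ 2)) :
    ∀ μ, MemP2 μ → ∀ y z : EuclideanSpace ℝ (Fin n),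
      D2ψ μ y z = D2ψ μ z y + Dψ μ y - Dψ μ z := by
  intro μ hμ y z
  have hint1 : ∀ ρ, MemP2 ρ → Integrable (Dψ ρ) μ := fun ρ hρ => by
    obtain ⟨K, hK, hρK⟩ := exists_W2_dirac_zero_le hρ
    obtain ⟨C, hC⟩ := hgrowth K hK
    exact integrable_of_abs_le_mul_add_sq hμ (hcont1.continuous hρ) (c := 1)
      fun x => by simpa using (hC ρ hρ hρK x 0).1
  have hint2 : ∀ w, ∀ ρ, MemP2 ρ → Integrable (D2ψ ρ w) μ := fun w ρ hρ => by
    obtain ⟨K, hK, hρK⟩ := exists_W2_dirac_zero_le hρ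
    obtain ⟨C, hC⟩ := hgrowth K hK
    exact integrable_of_abs_le_mul_add_sq hμ (hcont2.continuous hρ w)
      fun x => (hC ρ hρ hρK w x).2
  have hyz := tendsto_double_diff_quotient_diracMix (y := y) hμ hD1 (hD2 z) hcont1 hcont2 hint1
    (hint2 z)
  have hzy := tendsto_double_diff_quotient_diracMix (y := z) hμ hD1 (hD2 y) hcont1 hcont2 hint1
    (hint2 y)
  simp only [diracMix_comm] at hzy
  linarith [tendsto_nhds_unique hyz (hzy.congr fun t => by ring)]
end
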